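/- arXiv:1302.0148 — 11 statements merged into one kernel-verified Lean document; each statement's English description precedes it below -/
import Mathlib

section
/- Let V be a vector space and U ⊂ V a subspace. If an element A of V_{λ,μ} = V[[λ^{-1}, μ^{-1}, (λ+μ)^{-1}]][λ,μ] has the property that its expansion ι_{μ,λ}A ∈ V((λ^{-1}))((μ^{-1})), obtained by expanding negative powers of λ+μ in the region |μ|>|λ|, has all coefficients in U, then A lies in U_{λ,μ} = U[[λ^{-1}, μ^{-1}, (λ+μ)^{-1}]][λ,μ]. -/
/-- The integer binomial coefficient `C(p, k)` for `p ∈ ℤ`, `k ∈ ℕ`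
(the integer division is exact). -/
noncomputable def zchoose (p : ℤ) (k : ℕ) : ℤ :=
  (∏ i ∈ Finset.range k, (p - (i : ℤ))) / (k.factorial : ℤ)

/-- Given an element of `V_{λ,μ} = V[[λ⁻¹, μ⁻¹, (λ+μ)⁻¹]][λ,μ]` presented by its
coefficients `c m n p` of the monomials `λ^m μ^n (λ+μ)^p`, this is the coefficient of
`λ^a μ^b` in the expansion `ι_{μ,λ}` obtained by expanding the negative powers of `λ+μ`
in the region `|μ| > |λ|`, i.e. `(λ+μ)^p = Σ_{k ≥ 0} C(p,k) λ^k μ^{p-k}`. -/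
noncomputable def expandCoeff {V : Type*} [AddCommGroup V]
    (c : ℤ → ℤ → ℤ → V) (a b : ℤ) : V :=
  ∑ᶠ m : ℤ, ∑ᶠ n : ℤ, ∑ᶠ p : ℤ,
    if m + n + p = a + b ∧ m ≤ a then (zchoose p (a - m).toNat) • c m n p else 0

/-!
Work in one degree `d = a + b` at a time, and let `s a` be the coefficient of `λ^a μ^(d-a)` in
`ι_{μ,λ} A`. We rewrite `A` as `∑ v_a λ^a μ^(d-a) + ∑ w_m λ^m (λ+μ)^(d-m)`, with `a` and `m`
bounded above independently of `d`, where all `v_a` and `w_m` are `ℤ`-linear combinations of the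
`s a` and hence lie in `U`. Beyond a fixed `λ`-exponent only the pole terms contribute, and there
`s` is annihilated by `(λ+μ)^J`. Such a sequence is resolved one pole at a time: `(λ+μ) s` needs
one pole fewer, and what remains is alternating, a multiple of the expansion of
`λ^(d+1) (λ+μ)^(-1)`. The `v_a` are then the remaining differences.
-/

open Finset

lemma zchoose_eq_choose (p : ℤ) (k : ℕ) : zchoose p k = Ring.choose p k := by
  rw [zchoose, ← descPochhammer_eval_eq_prod_range, Polynomial.eval_eq_smeval,
    Ring.descPochhammer_eq_factorial_smul_choose, nsmul_eq_mul,
    Int.mul_ediv_cancel_left _ (by exact_mod_cast k.factorial_ne_zero)]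

lemma Ring.choose_neg_one (k : ℕ) : Ring.choose (-1 : ℤ) k = (-1) ^ k := by
  induction k with
  | zero => exact Ring.choose_zero_right _
  | succ k ih =>
    have := Ring.choose_succ_succ (-1 : ℤ) k
    rw [neg_add_cancel, Ring.choose_zero_succ, ih] at this
    rw [pow_succ]
    linarith

lemma sum_range_choose_mul_choose (p : ℤ) (J t : ℕ) :
    ∑ k ∈ range (J + 1), (J.choose k : ℤ) * (if k ≤ t then Ring.choose p (t - k) else 0) =
      Ring.choose (p + J) t := by
  rw [add_comm p, Ring.add_choose_eq t (Commute.all _ _),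
    Nat.sum_antidiagonal_eq_sum_range_succ (fun i j => Ring.choose (J : ℤ) i * Ring.choose p j)]
  set f : ℕ → ℤ := fun k => (J.choose k : ℤ) * (if k ≤ t then Ring.choose p (t - k) else 0)
  calc ∑ k ∈ range (J + 1), f k = ∑ k ∈ range (J + 1 + t), f k :=
        sum_subset (range_subset_range.2 (Nat.le_add_right _ _)) fun k _ hk => by
          simp only [f, Nat.choose_eq_zero_of_lt (by simpa using hk), Nat.cast_zero, zero_mul]
    _ = ∑ k ∈ range (t + 1), f k :=
        (sum_subset (range_subset_range.2 (by omega)) fun k _ hk => by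
          simp only [f, if_neg (by simpa using hk : ¬k ≤ t), mul_zero]).symm
    _ = _ := sum_congr rfl fun k hk => by
        simp only [f, if_pos (Nat.lt_succ_iff.1 (mem_range.1 hk)), Ring.choose_natCast]

section

variable {W : Type*} [AddCommGroup W]

def SupportBoundedBy (c : ℤ → ℤ → ℤ → W) (M N P : ℤ) : Prop :=
  ∀ m n p, c m n p ≠ 0 → m ≤ M ∧ n ≤ N ∧ p ≤ P

lemma SupportBoundedBy.mono {c : ℤ → ℤ → ℤ → W} {M N P M' N' P' : ℤ}
    (hc : SupportBoundedBy c M N P) (hM : M ≤ M') (hN : N ≤ N') (hP : P ≤ P') :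
    SupportBoundedBy c M' N' P' := fun m n p h => by
  obtain ⟨h₁, h₂, h₃⟩ := hc m n p h
  exact ⟨h₁.trans hM, h₂.trans hN, h₃.trans hP⟩

lemma SupportBoundedBy.add {c₁ c₂ : ℤ → ℤ → ℤ → W} {M N P : ℤ}
    (h₁ : SupportBoundedBy c₁ M N P) (h₂ : SupportBoundedBy c₂ M N P) :
    SupportBoundedBy (c₁ + c₂) M N P := fun m n p h => by
  by_cases h0 : c₁ m n p = 0
  · exact h₂ m n p (by simpa [h0] using h)
  · exact h₁ m n p h0

lemma expandCoeff_eq_sum {c : ℤ → ℤ → ℤ → W} {M N P : ℤ} (hc : SupportBoundedBy c M N P)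
    (a b : ℤ) :
    expandCoeff c a b = ∑ m ∈ Icc (a + b - N - P) M, ∑ n ∈ Icc (a + b - M - P) N,
      if m ≤ a then Ring.choose (a + b - m - n) (a - m).toNat • c m n (a + b - m - n) else 0 := by
  have hp : ∀ m n, (∑ᶠ p : ℤ, if m + n + p = a + b ∧ m ≤ a then zchoose p (a - m).toNat • c m n p
      else 0) =
      if m ≤ a then Ring.choose (a + b - m - n) (a - m).toNat • c m n (a + b - m - n) else 0 := by
    intro m n
    rw [finsum_eq_single _ (a + b - m - n) fun p hp => if_neg fun h => hp (by omega)]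
    by_cases hm : m ≤ a
    · rw [if_pos ⟨by ring, hm⟩, if_pos hm, zchoose_eq_choose]
    · rw [if_neg fun h => hm h.2, if_neg hm]
  have hF : ∀ m n, (if m ≤ a then Ring.choose (a + b - m - n) (a - m).toNat •
      c m n (a + b - m - n) else 0) ≠ 0 →
      m ∈ Icc (a + b - N - P) M ∧ n ∈ Icc (a + b - M - P) N := by
    intro m n h
    have hc0 : c m n (a + b - m - n) ≠ 0 := fun h0 => h (by simp [h0])
    obtain ⟨h₁, h₂, h₃⟩ := hc _ _ _ hc0
    simp only [mem_Icc]
    omega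
  have hn : ∀ m, (∑ᶠ n : ℤ, if m ≤ a then Ring.choose (a + b - m - n) (a - m).toNat •
      c m n (a + b - m - n) else 0) = ∑ n ∈ Icc (a + b - M - P) N,
      if m ≤ a then Ring.choose (a + b - m - n) (a - m).toNat • c m n (a + b - m - n) else 0 :=
    fun m => finsum_eq_sum_of_support_subset _ fun n hn => (hF m n hn).2
  simp only [expandCoeff, hp, hn]
  refine finsum_eq_sum_of_support_subset _ fun m hm => ?_
  obtain ⟨n, -, hn⟩ := exists_ne_zero_of_sum_ne_zero hm
  exact (hF m n hn).1

lemma expandCoeff_eq_zero {c : ℤ → ℤ → ℤ → W} {M N P : ℤ} (hc : SupportBoundedBy c M N P)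
    {a b : ℤ} (h : N + P < b ∨ M + N + P < a + b) : expandCoeff c a b = 0 := by
  rw [expandCoeff_eq_sum hc]
  rcases h with h | h
  · refine sum_eq_zero fun m hm => sum_eq_zero fun n hn => if_neg ?_
    simp only [mem_Icc] at hm
    omega
  · exact sum_eq_zero fun m _ => by rw [Icc_eq_empty (by omega), sum_empty]

lemma expandCoeff_add {c₁ c₂ : ℤ → ℤ → ℤ → W} {M N P : ℤ} (h₁ : SupportBoundedBy c₁ M N P)
    (h₂ : SupportBoundedBy c₂ M N P) (a b : ℤ) :
    expandCoeff (c₁ + c₂) a b = expandCoeff c₁ a b + expandCoeff c₂ a b := by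
  simp only [expandCoeff_eq_sum (h₁.add h₂), expandCoeff_eq_sum h₁, expandCoeff_eq_sum h₂,
    ← sum_add_distrib, Pi.add_apply, smul_add, ite_add_ite, add_zero]

-- The left side is the coefficient of `λ^a` in the degree `d + J` part of `(λ+μ)^J A`; once `J`
-- clears the poles in degree `d`, this part is a polynomial of `λ`-degree at most `M + P + J`.
lemma sum_choose_smul_expandCoeff_eq_zero {c : ℤ → ℤ → ℤ → W} {M N P : ℤ}
    (hc : SupportBoundedBy c M N P) (d a : ℤ) (J : ℕ) (hJ : M + N ≤ d + J)
    (ha : M + P + J < a) :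
    ∑ k ∈ range (J + 1), J.choose k • expandCoeff c (a - k) (d - (a - k)) = 0 := by
  simp only [expandCoeff_eq_sum hc, show ∀ k : ℤ, a - k + (d - (a - k)) = d from fun k => by ring,
    smul_sum]
  rw [sum_comm]
  refine sum_eq_zero fun m _ => ?_
  rw [sum_comm]
  refine sum_eq_zero fun n hn => ?_
  by_cases h0 : c m n (d - m - n) = 0
  · simp [h0]
  obtain ⟨hm, hnN, hp⟩ := hc _ _ _ h0
  have hn : d - M - P ≤ n := (mem_Icc.1 hn).1
  have hk : ∀ k ∈ range (J + 1), J.choose k • (if m ≤ a - k then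
      Ring.choose (d - m - n) (a - k - m).toNat • c m n (d - m - n) else 0) =
      ((J.choose k : ℤ) * if k ≤ (a - m).toNat then Ring.choose (d - m - n) ((a - m).toNat - k)
        else 0) • c m n (d - m - n) := by
    intro k _
    rw [← natCast_zsmul, mul_smul]
    congr 1
    by_cases hk : k ≤ (a - m).toNat
    · rw [if_pos (by omega), if_pos hk, show (a - k - m).toNat = (a - m).toNat - k by omega]
    · rw [if_neg (by omega), if_neg hk, zero_smul]
  rw [sum_congr rfl hk, ← sum_smul, sum_range_choose_mul_choose,
    show d - m - n + J = ((d - m - n + J).toNat : ℤ) by omega, Ring.choose_natCast,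
    Nat.choose_eq_zero_of_lt (by omega), Nat.cast_zero, zero_smul]

def polyPart (v : ℤ → ℤ → W) : ℤ → ℤ → ℤ → W := fun m n p => if p = 0 then v m n else 0

-- `w d m` is the coefficient of `λ^m (λ+μ)^(d-m)`.
def polePart (w : ℤ → ℤ → W) : ℤ → ℤ → ℤ → W :=
  fun m n p => if n = 0 ∧ p < 0 then w (m + p) m else 0

lemma expandCoeff_polyPart (v : ℤ → ℤ → W) (a b : ℤ) : expandCoeff (polyPart v) a b = v a b := by
  have hp : ∀ m n, (∑ᶠ p : ℤ, if m + n + p = a + b ∧ m ≤ a then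
      zchoose p (a - m).toNat • polyPart v m n p else 0) =
      if m = a ∧ n = b then v a b else 0 := by
    intro m n
    rw [finsum_eq_single _ 0 fun p hp => by simp [polyPart, hp]]
    simp only [polyPart, if_true, add_zero, zchoose_eq_choose]
    by_cases hm : m = a
    · subst hm
      by_cases hn : n = b <;> simp [hn]
    · rcases lt_or_gt_of_ne hm with hm | hm
      · rw [show (a - m).toNat = (a - m - 1).toNat + 1 by omega, Ring.choose_zero_succ]
        simp [hm.ne]
      · simp [hm.ne', hm.not_ge]
  simp only [expandCoeff, hp]
  rw [finsum_eq_single _ a fun m hm => by simp [hm], finsum_eq_single _ b fun n hn => by simp [hn]]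
  simp

lemma expandCoeff_polePart (w : ℤ → ℤ → W) (a b : ℤ) :
    expandCoeff (polePart w) a b =
      ∑ m ∈ Ioc (a + b) a, Ring.choose (a + b - m) (a - m).toNat • w (a + b) m := by
  have hnp : ∀ m, (∑ᶠ n : ℤ, ∑ᶠ p : ℤ, if m + n + p = a + b ∧ m ≤ a then
      zchoose p (a - m).toNat • polePart w m n p else 0) =
      if m ∈ Ioc (a + b) a then Ring.choose (a + b - m) (a - m).toNat • w (a + b) m else 0 := by
    intro m
    rw [finsum_eq_single _ 0 fun n hn => finsum_eq_zero_of_forall_eq_zero fun p => by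
      simp [polePart, hn], finsum_eq_single _ (a + b - m) fun p hp => by
      rw [if_neg fun h => hp (by omega)]]
    simp only [polePart, zchoose_eq_choose, mem_Ioc, true_and, add_zero,
      show m + (a + b - m) = a + b by ring]
    by_cases hm : a + b < m ∧ m ≤ a
    · rw [if_pos hm.2, if_pos (by omega), if_pos hm]
    · rw [if_neg hm]
      by_cases hma : m ≤ a
      · rw [if_pos hma, if_neg (by omega), smul_zero]
      · rw [if_neg hma]
  simp only [expandCoeff, hnp]
  rw [finsum_eq_sum_of_support_subset _ fun m hm => ?_]
  · exact sum_congr rfl fun m hm => if_pos hm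
  · by_contra h
    exact hm (if_neg h)

lemma eq_neg_one_pow_smul_of_add_eq_zero {r : ℤ → W} {B : ℤ}
    (h : ∀ a, B < a → r a + r (a - 1) = 0) (n : ℕ) : r (B + n) = (-1 : ℤ) ^ n • r B := by
  induction n with
  | zero => simp
  | succ n ih =>
    have := h (B + (n + 1 : ℕ)) (by omega)
    rw [show B + (n + 1 : ℕ) - 1 = B + n by push_cast; ring, ih] at this
    rw [pow_succ, mul_neg_one, neg_smul, ← eq_neg_iff_add_eq_zero.2 this]

-- `Ring.choose (d - m) (a - m).toNat` is the coefficient of `λ^a μ^(d-a)` in `λ^m (λ+μ)^(d-m)`.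
theorem exists_eq_sum_choose_smul_of_recurrence (G : AddSubgroup W) (J : ℕ) (s : ℤ → W)
    (d A : ℤ) (hs : ∀ a, s a ∈ G) (hA : d + J ≤ A)
    (hrec : ∀ a, A + J < a → ∑ k ∈ range (J + 1), J.choose k • s (a - k) = 0) :
    ∃ w : ℤ → W, (∀ m, w m ∈ G) ∧
      ∀ a, A < a → s a = ∑ m ∈ Ioc d (d + J), Ring.choose (d - m) (a - m).toNat • w m := by
  induction J generalizing s d A with
  | zero =>
    refine ⟨0, fun _ => G.zero_mem, fun a ha => ?_⟩
    simpa using hrec a (by simpa using ha)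
  | succ J ih =>
    set t : ℤ → W := fun a => s a + s (a - 1)
    have ht : ∀ a, A + 1 + J < a → ∑ k ∈ range (J + 1), J.choose k • t (a - k) = 0 := by
      intro a ha
      have := hrec a (by push_cast; omega)
      rw [sum_choose_succ_nsmul (fun i _ => s (a - i)) J] at this
      simpa [t, smul_add, sum_add_distrib, sub_sub] using this
    obtain ⟨w, hwG, hw⟩ := ih t (d + 1) (A + 1) (fun a => G.add_mem (hs a) (hs _)) (by omega) ht
    set r : ℤ → W := fun a =>
      s a - ∑ m ∈ Ioc (d + 1) (d + 1 + J), Ring.choose (d - m) (a - m).toNat • w m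
    have hr : ∀ a, A + 1 < a → r a + r (a - 1) = 0 := by
      intro a ha
      have hpascal : ∀ m ∈ Ioc (d + 1) (d + 1 + J), Ring.choose (d - m) (a - m).toNat • w m +
          Ring.choose (d - m) (a - 1 - m).toNat • w m =
          Ring.choose (d + 1 - m) (a - m).toNat • w m := by
        intro m hm
        rw [mem_Ioc] at hm
        rw [← add_smul, show (a - m).toNat = (a - 1 - m).toNat + 1 by omega,
          show d + 1 - m = d - m + 1 by ring, Ring.choose_succ_succ, add_comm]
      calc r a + r (a - 1) = t a - ∑ m ∈ Ioc (d + 1) (d + 1 + J),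
            Ring.choose (d + 1 - m) (a - m).toNat • w m := by
            rw [← sum_congr rfl hpascal, sum_add_distrib]
            simp only [r, t]
            abel
        _ = 0 := by rw [hw a ha, sub_self]
    set ρ := (-1 : ℤ) ^ (A - d).toNat • r (A + 1)
    refine ⟨Function.update w (d + 1) ρ, fun m => ?_, fun a ha => ?_⟩
    · rw [Function.update_apply]
      split_ifs
      · exact G.zsmul_mem (G.sub_mem (hs _) (G.sum_mem fun m _ => G.zsmul_mem (hwG m) _)) _
      · exact hwG m
    have hra : r a = Ring.choose (-1) (a - (d + 1)).toNat • ρ := by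
      obtain ⟨n, rfl⟩ : ∃ n : ℕ, a = A + 1 + n := ⟨(a - A - 1).toNat, by omega⟩
      rw [eq_neg_one_pow_smul_of_add_eq_zero hr n, Ring.choose_neg_one, smul_smul,
        show (A + 1 + n - (d + 1)).toNat = n + (A - d).toNat by omega, pow_add, mul_assoc,
        ← mul_pow, neg_one_mul, neg_neg, one_pow, mul_one]
    rw [← insert_Ioc_add_one_left_eq_Ioc (by omega), sum_insert left_notMem_Ioc,
      Function.update_self, show d + (J + 1 : ℕ) = d + 1 + J by push_cast; ring,
      show d - (d + 1) = -1 by ring, ← hra]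
    rw [sum_congr rfl fun m hm => by rw [Function.update_of_ne (mem_Ioc.1 hm).1.ne']]
    simp only [r]
    abel

lemma exists_polePart (G : AddSubgroup W)
    {c : ℤ → ℤ → ℤ → W} {M N P : ℤ} (hc : SupportBoundedBy c M N P)
    (hG : ∀ a b, expandCoeff c a b ∈ G) :
    ∃ w : ℤ → ℤ → W, (∀ d m, w d m ∈ G) ∧
      SupportBoundedBy (polePart w) (M + |N| + |P|) 0 (-1) ∧
      ∀ a b, M + |N| + |P| < a → expandCoeff (polePart w) a b = expandCoeff c a b := by
  set M₁ := M + |N| + |P|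
  have hN := le_abs_self N
  have hP := le_abs_self P
  have hN₀ := abs_nonneg N
  have hP₀ := abs_nonneg P
  have hdegree : ∀ d, ∃ u : ℤ → W, (∀ m, u m ∈ G) ∧ (∀ m, M₁ < m → u m = 0) ∧
      ∀ a, M₁ < a → ∑ m ∈ Ioc d a, Ring.choose (d - m) (a - m).toNat • u m =
        expandCoeff c a (d - a) := by
    intro d
    rcases le_or_gt d M₁ with hd | hd
    · obtain ⟨u, huG, hu⟩ := exists_eq_sum_choose_smul_of_recurrence G (M₁ - d).toNat
        (fun a => expandCoeff c a (d - a)) d M₁ (fun a => hG _ _) (by omega)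
        fun a ha => sum_choose_smul_expandCoeff_eq_zero hc d a _ (by omega) (by omega)
      refine ⟨fun m => if m ≤ M₁ then u m else 0, fun m => ?_, fun m hm => if_neg (by omega),
        fun a ha => ?_⟩
      · dsimp only
        split_ifs
        exacts [huG m, G.zero_mem]
      · rw [hu a ha]
        simp only [smul_ite, smul_zero]
        rw [← sum_filter]
        congr 1
        ext m
        simp only [mem_filter, mem_Ioc]
        omega
    · refine ⟨0, fun _ => G.zero_mem, fun _ _ => rfl, fun a ha => ?_⟩
      rw [expandCoeff_eq_zero hc (Or.inr (by omega))]
      simp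
  choose w hwG hw0 hw using hdegree
  refine ⟨w, hwG, fun m n p h => ?_, fun a b ha => ?_⟩
  · simp only [polePart] at h
    split_ifs at h with hnp
    · have : m ≤ M₁ := by
        by_contra hm
        exact h (hw0 _ _ (by omega))
      omega
    · exact absurd rfl h
  · rw [expandCoeff_polePart, hw (a + b) a ha, add_sub_cancel_left]

theorem exists_presentation_mem_of_expandCoeff_mem (G : AddSubgroup W)
    {c : ℤ → ℤ → ℤ → W} {M N P : ℤ} (hc : SupportBoundedBy c M N P)
    (hG : ∀ a b, expandCoeff c a b ∈ G) :
    ∃ c' : ℤ → ℤ → ℤ → W, SupportBoundedBy c' (M + |N| + |P|) (|N| + |P|) 0 ∧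
      (∀ m n p, c' m n p ∈ G) ∧ ∀ a b, expandCoeff c' a b = expandCoeff c a b := by
  obtain ⟨w, hwG, hw_bdd, hw⟩ := exists_polePart G hc hG
  set M₁ := M + |N| + |P|
  have hNP : 0 ≤ |N| + |P| := by positivity
  let v : ℤ → ℤ → W := fun a b =>
    if a ≤ M₁ then expandCoeff c a b - expandCoeff (polePart w) a b else 0
  have hv_bdd : SupportBoundedBy (polyPart v) M₁ (|N| + |P|) 0 := by
    intro m n p h
    simp only [polyPart, v] at h
    split_ifs at h with hp hm
    · refine ⟨hm, not_lt.1 fun hn => h ?_, hp.le⟩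
      rw [expandCoeff_eq_zero hc (Or.inl (by linarith [le_abs_self N, le_abs_self P])),
        expandCoeff_eq_zero hw_bdd (Or.inl (by omega)), sub_zero]
    all_goals exact absurd rfl h
  have hv : ∀ a b, v a b ∈ G := fun a b => by
    simp only [v]
    split_ifs
    · rw [expandCoeff_polePart]
      exact G.sub_mem (hG _ _) (G.sum_mem fun _ _ => G.zsmul_mem (hwG _ _) _)
    · exact G.zero_mem
  have hw_bdd' := hw_bdd.mono le_rfl hNP (by norm_num : (-1 : ℤ) ≤ 0)
  refine ⟨polyPart v + polePart w, hv_bdd.add hw_bdd', fun m n p => G.add_mem ?_ ?_,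
    fun a b => ?_⟩
  · simp only [polyPart]
    split_ifs
    exacts [hv _ _, G.zero_mem]
  · simp only [polePart]
    split_ifs
    exacts [hwG _ _, G.zero_mem]
  · rw [expandCoeff_add hv_bdd hw_bdd', expandCoeff_polyPart]
    by_cases ha : a ≤ M₁
    · simp only [v, if_pos ha, sub_add_cancel]
    · simp only [v, if_neg ha, zero_add]
      exact hw a b (by omega)

end

/-- Let `U ⊆ V` be a subspace.  If an element `A` of
`V_{λ,μ} = V[[λ⁻¹, μ⁻¹, (λ+μ)⁻¹]][λ,μ]` (presented by coefficients `c` with bounded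
support) has the property that all coefficients of its expansion
`ι_{μ,λ} A ∈ V((λ⁻¹))((μ⁻¹))` lie in `U`, then `A` lies in `U_{λ,μ}`: it can be presented
by coefficients lying in `U` (with bounded support and the same expansion). -/
theorem stmt2 (F V : Type*) [Field F] [AddCommGroup V] [Module F V] (U : Submodule F V)
    (M N P : ℤ) (c : ℤ → ℤ → ℤ → V)
    (hc : ∀ m n p : ℤ, c m n p ≠ 0 → m ≤ M ∧ n ≤ N ∧ p ≤ P)
    (hU : ∀ a b : ℤ, expandCoeff c a b ∈ U) :
    ∃ (M' N' P' : ℤ) (c' : ℤ → ℤ → ℤ → V),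
      (∀ m n p : ℤ, c' m n p ≠ 0 → m ≤ M' ∧ n ≤ N' ∧ p ≤ P') ∧
      (∀ m n p : ℤ, c' m n p ∈ U) ∧
      (∀ a b : ℤ, expandCoeff c' a b = expandCoeff c a b) := by
  obtain ⟨c', hc'⟩ := exists_presentation_mem_of_expandCoeff_mem U.toAddSubgroup hc hU
  exact ⟨_, _, _, c', hc'⟩
end

section
/- If V is a commutative algebra and S, T : V → V are linear endomorphisms, then for any A(λ,μ), B(λ,μ) in V_{λ,μ} = V[[λ^{-1}, μ^{-1}, (λ+μ)^{-1}]][λ,μ], the expression A(λ+S, μ+T)B(λ,μ), where negative powers of λ+S and μ+T are expanded in non-negative powers of S and T acting on the coefficients of B, is a well-defined element of V_{λ,μ}: each coefficient is given by a finite sum. -/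
/-- The term of the expansion of `A(λ+S, μ+T)B(λ,μ)` contributing to the coefficient of
`λ^m̄ μ^n̄ (λ+μ)^p̄`, indexed by the monomial indices `(m,n,p)` of `A`, `(m',n',p')` of
`B`, and the binomial-expansion indices `(i,j,k)`:
`C(m,i) C(n,j) C(p,k) · a_{m,n,p} · (Sⁱ Tʲ (S+T)ᵏ b_{m',n',p'})` whenever
`m-i+m' = m̄`, `n-j+n' = n̄`, `p-k+p' = p̄`, and `0` otherwise. -/
noncomputable def prodTerm {F V : Type*} [Field F] [CommRing V] [Algebra F V]
    (S T : Module.End F V) (a b : ℤ → ℤ → ℤ → V) (mb nb pb : ℤ)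
    (x : (ℤ × ℤ × ℤ) × (ℤ × ℤ × ℤ) × ℕ × ℕ × ℕ) : V :=
  match x with
  | ((m, n, p), (m', n', p'), (i, j, k)) =>
    if m - (i : ℤ) + m' = mb ∧ n - (j : ℤ) + n' = nb ∧ p - (k : ℤ) + p' = pb then
      (zchoose m i * zchoose n j * zchoose p k) •
        (a m n p * ((S ^ i) ((T ^ j) (((S + T) ^ k) (b m' n' p')))))
    else 0

/-- If `V` is a commutative algebra and `S, T : V → V` are linear endomorphisms, then for
`A, B ∈ V_{λ,μ}` (presented by coefficients `a`, `b` with support bounded by `(M,N,P)`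
resp. `(M',N',P')`), the expression `A(λ+S, μ+T)B(λ,μ)` is a well-defined element of
`V_{λ,μ}`: for each monomial `λ^m̄ μ^n̄ (λ+μ)^p̄` the contributing terms form a finite
family, and they all vanish unless `m̄ ≤ M+M'`, `n̄ ≤ N+N'`, `p̄ ≤ P+P'`. -/
theorem stmt3 (F V : Type*) [Field F] [CommRing V] [Algebra F V]
    (S T : Module.End F V) (M N P M' N' P' : ℤ)
    (a b : ℤ → ℤ → ℤ → V)
    (ha : ∀ m n p : ℤ, a m n p ≠ 0 → m ≤ M ∧ n ≤ N ∧ p ≤ P)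
    (hb : ∀ m n p : ℤ, b m n p ≠ 0 → m ≤ M' ∧ n ≤ N' ∧ p ≤ P') :
    ∀ mb nb pb : ℤ,
      (Function.support (prodTerm S T a b mb nb pb)).Finite ∧
      (¬(mb ≤ M + M' ∧ nb ≤ N + N' ∧ pb ≤ P + P') →
        ∀ x, prodTerm S T a b mb nb pb x = 0) := by
  intro mb nb pb
  have key : ∀ m n p m' n' p' : ℤ, ∀ i j k : ℕ,
      prodTerm S T a b mb nb pb ((m,n,p),(m',n',p'),(i,j,k)) ≠ 0 →
      (m - (i:ℤ) + m' = mb ∧ n - (j:ℤ) + n' = nb ∧ p - (k:ℤ) + p' = pb) ∧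
      (m ≤ M ∧ n ≤ N ∧ p ≤ P) ∧ (m' ≤ M' ∧ n' ≤ N' ∧ p' ≤ P') := by
    intro m n p m' n' p' i j k h
    unfold prodTerm at h
    dsimp only at h
    split_ifs at h with hc
    · refine ⟨hc, ?_, ?_⟩
      · apply ha
        intro h0
        apply h; rw [h0, zero_mul, smul_zero]
      · apply hb
        intro h0
        apply h; rw [h0, map_zero, map_zero, map_zero, mul_zero, smul_zero]
    · exact absurd rfl h
  constructor
  · apply Set.Finite.subset
      (Set.Finite.prod
        (Set.Finite.prod (Set.finite_Icc (mb - M') M)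
          (Set.Finite.prod (Set.finite_Icc (nb - N') N) (Set.finite_Icc (pb - P') P)))
        (Set.Finite.prod
          (Set.Finite.prod (Set.finite_Icc (mb - M) M')
            (Set.Finite.prod (Set.finite_Icc (nb - N) N') (Set.finite_Icc (pb - P) P')))
          (Set.Finite.prod (Set.finite_Iic ((M + M' - mb).toNat))
            (Set.Finite.prod (Set.finite_Iic ((N + N' - nb).toNat))
              (Set.finite_Iic ((P + P' - pb).toNat))))))
    rintro ⟨⟨m,n,p⟩,⟨m',n',p'⟩,i,j,k⟩ hx
    obtain ⟨⟨e1,e2,e3⟩, ⟨h1,h2,h3⟩, h1',h2',h3'⟩ := key m n p m' n' p' i j k hx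
    simp only [Set.mem_prod, Set.mem_Icc, Set.mem_Iic]
    omega
  · intro hcon ⟨⟨m,n,p⟩,⟨m',n',p'⟩,i,j,k⟩
    by_contra h
    obtain ⟨⟨e1,e2,e3⟩, ⟨h1,h2,h3⟩, h1',h2',h3'⟩ := key m n p m' n' p' i j k h
    omega
end

section
/- For n ≥ 0, define polynomials Q_p(x_0,…,x_n) = Σ_{i+j=p, 0≤i,j≤n} x_i x_j for p = 0,…,2n, which are homogeneous of degree p when deg(x_i) = i. Then for every n ≥ 1, the polynomial Q_{n+1}^2 does not lie in the linear span over the base field of the products Q_p · Q_{2n+2−p} for 2 ≤ p ≤ n. -/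
open MvPolynomial

/-- The polynomial `Q_p(x_0,…,x_n) = Σ_{i+j=p, 0 ≤ i,j ≤ n} x_i x_j`. -/
noncomputable def Qpoly (F : Type*) [Field F] (n p : ℕ) : MvPolynomial (Fin (n + 1)) F :=
  ∑ i : Fin (n + 1), ∑ j : Fin (n + 1), if (i : ℕ) + (j : ℕ) = p then X i * X j else 0

lemma evalQ (F : Type*) [Field F] (n p : ℕ) (v : Fin (n + 1) → F) :
    eval v (Qpoly F n p) =
      ∑ i : Fin (n + 1), ∑ j : Fin (n + 1),
        if (i : ℕ) + (j : ℕ) = p then v i * v j else 0 := by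
  simp [Qpoly, apply_ite (eval v)]

lemma sum_single (F : Type*) [Field F] (n p a b : ℕ) (ha : a < n + 1) (hb : b < n + 1) :
    (∑ i : Fin (n + 1), ∑ j : Fin (n + 1),
        if (i : ℕ) + (j : ℕ) = p then
          (if (i : ℕ) = a then (1 : F) else 0) * (if (j : ℕ) = b then (1 : F) else 0)
        else 0) = if a + b = p then 1 else 0 := by
  have key : ∀ i j : Fin (n + 1),
      (if (i : ℕ) + (j : ℕ) = p then
          (if (i : ℕ) = a then (1 : F) else 0) * (if (j : ℕ) = b then (1 : F) else 0)
        else 0) =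
      if i = (⟨a, ha⟩ : Fin (n + 1)) then
        (if j = (⟨b, hb⟩ : Fin (n + 1)) then (if a + b = p then (1 : F) else 0) else 0)
      else 0 := by
    intro i j
    rcases i with ⟨i, hi⟩; rcases j with ⟨j, hj⟩
    simp only [Fin.mk.injEq]
    split_ifs <;> simp_all
  simp_rw [key]
  simp [Finset.sum_ite_eq']

lemma eval_single (F : Type*) [Field F] (n p a : ℕ) (ha : a < n + 1) :
    eval (fun i : Fin (n + 1) => if (i : ℕ) = a then (1 : F) else 0) (Qpoly F n p) =
      if a + a = p then 1 else 0 := by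
  rw [evalQ]
  exact sum_single F n p a a ha ha

lemma eval_pair (F : Type*) [Field F] (n p a b : ℕ) (hab : a ≠ b)
    (ha : a < n + 1) (hb : b < n + 1) :
    eval (fun i : Fin (n + 1) => if (i : ℕ) = a ∨ (i : ℕ) = b then (1 : F) else 0)
        (Qpoly F n p) =
      (if a + a = p then 1 else 0) + (if a + b = p then 1 else 0) +
        (if b + a = p then 1 else 0) + (if b + b = p then 1 else 0) := by
  rw [evalQ]
  have hv : ∀ i : Fin (n + 1),
      (if (i : ℕ) = a ∨ (i : ℕ) = b then (1 : F) else 0) =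
      (if (i : ℕ) = a then (1 : F) else 0) + (if (i : ℕ) = b then (1 : F) else 0) := by
    intro i
    by_cases h1 : (i : ℕ) = a <;> by_cases h2 : (i : ℕ) = b <;> simp_all
  have hsplit : ∀ (c : Prop) [Decidable c] (x y : F),
      (if c then x + y else 0) = (if c then x else 0) + (if c then y else 0) := by
    intros c _ x y; split <;> simp
  simp_rw [hv, add_mul, mul_add, hsplit, Finset.sum_add_distrib]
  rw [sum_single F n p a a ha ha, sum_single F n p a b ha hb,
    sum_single F n p b a hb ha, sum_single F n p b b hb hb]
  ring

/-- For every `n ≥ 1`, `Q_{n+1}^2` does not lie in the `F`-linear span of the products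
`Q_p · Q_{2n+2-p}` for `2 ≤ p ≤ n`. -/
theorem stmt6 (F : Type*) [Field F] [CharZero F] (n : ℕ) (hn : 1 ≤ n) :
    (Qpoly F n (n + 1)) ^ 2 ∉
      Submodule.span F
        ((fun p => Qpoly F n p * Qpoly F n (2 * n + 2 - p)) '' (Set.Icc 2 n)) := by
  intro hmem
  rcases Nat.even_or_odd n with ⟨m, hm⟩ | ⟨k, hk⟩
  · -- even case : n = m + m, m ≥ 1
    have hm1 : 1 ≤ m := by omega
    set v : Fin (n + 1) → F :=
      fun i => if (i : ℕ) = m ∨ (i : ℕ) = m + 1 then (1 : F) else 0 with hv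
    set w : Fin (n + 1) → F :=
      fun i => if (i : ℕ) = m - 1 ∨ (i : ℕ) = m + 1 then (1 : F) else 0 with hw
    have hP : 2 * eval v ((Qpoly F n (n + 1)) ^ 2) = eval w ((Qpoly F n (n + 1)) ^ 2) := by
      refine Submodule.span_induction (p := fun x _ => 2 * eval v x = eval w x)
        ?_ (by simp)
        (fun x y _ _ hx hy => by
          rw [map_add, map_add]; linear_combination hx + hy)
        (fun c x _ hx => by
          rw [MvPolynomial.smul_eval, MvPolynomial.smul_eval]
          linear_combination c * hx)
        hmem
      rintro x ⟨p, hp, rfl⟩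
      obtain ⟨hp2, hpn⟩ := hp
      have hx1 : eval v (Qpoly F n p) = if p = 2 * m then 1 else 0 := by
        rw [eval_pair F n p m (m + 1) (by omega) (by omega) (by omega)]
        split_ifs <;> first | (exfalso; omega) | norm_num
      have hx2 : eval v (Qpoly F n (2 * n + 2 - p)) = if p = 2 * m then 1 else 0 := by
        rw [eval_pair F n _ m (m + 1) (by omega) (by omega) (by omega)]
        split_ifs <;> first | (exfalso; omega) | norm_num
      have hx3 : eval w (Qpoly F n p) =
          (if p = 2 * m - 2 then 1 else 0) + (if p = 2 * m then 2 else 0) := by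
        rw [eval_pair F n p (m - 1) (m + 1) (by omega) (by omega) (by omega)]
        split_ifs <;> first | (exfalso; omega) | norm_num
      have hx4 : eval w (Qpoly F n (2 * n + 2 - p)) = if p = 2 * m then 1 else 0 := by
        rw [eval_pair F n _ (m - 1) (m + 1) (by omega) (by omega) (by omega)]
        split_ifs <;> first | (exfalso; omega) | norm_num
      simp only [map_mul, hx1, hx2, hx3, hx4]
      split_ifs <;> first | (exfalso; omega) | norm_num
    have hv1 : eval v (Qpoly F n (n + 1)) = 2 := by
      rw [eval_pair F n _ m (m + 1) (by omega) (by omega) (by omega)]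
      split_ifs <;> first | (exfalso; omega) | norm_num
    have hw1 : eval w (Qpoly F n (n + 1)) = 0 := by
      rw [eval_pair F n _ (m - 1) (m + 1) (by omega) (by omega) (by omega)]
      split_ifs <;> first | (exfalso; omega) | norm_num
    rw [map_pow, map_pow, hv1, hw1] at hP
    norm_num at hP
  · -- odd case : n = 2k + 1
    set v : Fin (n + 1) → F := fun i => if (i : ℕ) = k + 1 then (1 : F) else 0 with hv
    have hP : eval v ((Qpoly F n (n + 1)) ^ 2) = 0 := by
      refine Submodule.span_induction (p := fun x _ => eval v x = 0)
        ?_ (by simp) (fun x y _ _ hx hy => by simp [map_add, hx, hy])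
        (fun c x _ hx => by simp [MvPolynomial.smul_eval, hx]) hmem
      rintro x ⟨p, hp, rfl⟩
      obtain ⟨hp2, hpn⟩ := hp
      have hx1 : eval v (Qpoly F n p) = 0 := by
        rw [eval_single F n p (k + 1) (by omega), if_neg (by omega)]
      simp [map_mul, hx1]
    rw [map_pow, eval_single F n (n + 1) (k + 1) (by omega), if_pos (by omega)] at hP
    norm_num at hP
end

section
/- With Q_p(x_0,…,x_n) = Σ_{i+j=p, 0≤i,j≤n} x_i x_j as before, for every n ≥ 1 and every m ∈ {0,…,n}, the product Q_m · Q_{n+1} does not lie in the linear span over the base field of the products Q_p · Q_{m+n+1−p} for 0 ≤ p ≤ m−1. -/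
open MvPolynomial

private lemma qeval_eq (F : Type*) [Field F] (n q c : ℕ) :
    aeval (fun i : Fin (n+1) => if (i:ℕ) < c then (0:F) else 1) (Qpoly F n q)
      = ((∑ i : Fin (n+1), ∑ j : Fin (n+1),
          if (i:ℕ) + (j:ℕ) = q ∧ c ≤ (i:ℕ) ∧ c ≤ (j:ℕ) then 1 else 0 : ℕ) : F) := by
  push_cast
  simp only [Qpoly, map_sum,
    apply_ite (aeval (fun i : Fin (n+1) => if (i:ℕ) < c then (0:F) else 1)),
    map_mul, aeval_X, map_zero]
  refine Finset.sum_congr rfl fun i _ => Finset.sum_congr rfl fun j _ => ?_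
  split_ifs <;> first | (exfalso; omega) | ring1

private lemma qderiv_eq (F : Type*) [Field F] (n p c : ℕ) (κ : Fin (n+1)) :
    aeval (fun i : Fin (n+1) => if (i:ℕ) < c then (0:F) else 1)
        (pderiv κ (Qpoly F n p))
      = ((∑ i : Fin (n+1), ∑ j : Fin (n+1),
          if (i:ℕ) + (j:ℕ) = p then
            ((if c ≤ (i:ℕ) ∧ (j:ℕ) = (κ:ℕ) then 1 else 0)
              + (if c ≤ (j:ℕ) ∧ (i:ℕ) = (κ:ℕ) then 1 else 0)) else 0 : ℕ) : F) := by
  push_cast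
  simp only [Qpoly, map_sum,
    apply_ite (pderiv κ), pderiv_mul, pderiv_X, map_zero, map_add,
    apply_ite (aeval (fun i : Fin (n+1) => if (i:ℕ) < c then (0:F) else 1)),
    map_mul, map_one, aeval_X, Pi.single_apply, Fin.ext_iff]
  refine Finset.sum_congr rfl fun i _ => Finset.sum_congr rfl fun j _ => ?_
  split_ifs <;> first | (exfalso; omega) | ring1

private lemma nsum_ne_zero (n q c a b : ℕ) (ha : a ≤ n) (hb : b ≤ n) (hab : a + b = q)
    (hca : c ≤ a) (hcb : c ≤ b) :
    (∑ i : Fin (n+1), ∑ j : Fin (n+1),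
        if (i:ℕ) + (j:ℕ) = q ∧ c ≤ (i:ℕ) ∧ c ≤ (j:ℕ) then 1 else 0) ≠ 0 := by
  intro h
  rw [Finset.sum_eq_zero_iff] at h
  have h2 := h ⟨a, by omega⟩ (Finset.mem_univ _)
  rw [Finset.sum_eq_zero_iff] at h2
  have h3 := h2 ⟨b, by omega⟩ (Finset.mem_univ _)
  simp only [Fin.val_mk] at h3
  rw [if_pos ⟨hab, hca, hcb⟩] at h3
  omega

/-- For every `n ≥ 1` and every `m ∈ {0,…,n}`, the product `Q_m · Q_{n+1}` does not lie in
the `F`-linear span of the products `Q_p · Q_{m+n+1-p}` for `0 ≤ p ≤ m-1`. -/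
theorem stmt7 (F : Type*) [Field F] [CharZero F] (n m : ℕ) (hn : 1 ≤ n) (hm : m ≤ n) :
    Qpoly F n m * Qpoly F n (n + 1) ∉
      Submodule.span F
        ((fun p => Qpoly F n p * Qpoly F n (m + n + 1 - p)) '' (Set.Iio m)) := by
  intro hmem
  rcases Nat.even_or_odd m with ⟨k, hk⟩ | ⟨k, hk⟩
  · -- m = k + k (even case): evaluate at x_i = 0 for i < k, 1 otherwise
    set pt : Fin (n+1) → F := fun i => if (i:ℕ) < k then 0 else 1 with hpt
    have hker : Submodule.span F
        ((fun p => Qpoly F n p * Qpoly F n (m + n + 1 - p)) '' (Set.Iio m))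
        ≤ LinearMap.ker (aeval pt).toLinearMap := by
      rw [Submodule.span_le]
      rintro x ⟨p, hp, rfl⟩
      have hp' : p < m := hp
      simp only [SetLike.mem_coe, LinearMap.mem_ker, AlgHom.toLinearMap_apply, map_mul]
      have hz : aeval pt (Qpoly F n p) = 0 := by
        rw [hpt, qeval_eq]
        norm_cast
        refine Finset.sum_eq_zero fun i _ => Finset.sum_eq_zero fun j _ => ?_
        rw [if_neg (by omega)]
      rw [hz, zero_mul]
    have h0 : aeval pt (Qpoly F n m * Qpoly F n (n + 1)) = 0 := hker hmem
    rw [map_mul] at h0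
    have h1 : aeval pt (Qpoly F n m) ≠ 0 := by
      rw [hpt, qeval_eq]
      exact_mod_cast Nat.cast_ne_zero.mpr
        (nsum_ne_zero n m k k k (by omega) (by omega) (by omega) le_rfl le_rfl)
    have h2 : aeval pt (Qpoly F n (n+1)) ≠ 0 := by
      rw [hpt, qeval_eq]
      exact_mod_cast Nat.cast_ne_zero.mpr
        (nsum_ne_zero n (n+1) k (max k 1) (n + 1 - max k 1)
          (by omega) (by omega) (by omega) (by omega) (by omega))
    exact mul_ne_zero h1 h2 h0
  · -- m = 2k + 1 (odd case): evaluate (∂/∂x_k ·) at x_i = 0 for i ≤ k, 1 otherwise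
    have hkn : k < n + 1 := by omega
    have hκv : (((⟨k, hkn⟩ : Fin (n+1))):ℕ) = k := rfl
    set pt : Fin (n+1) → F := fun i => if (i:ℕ) < k + 1 then 0 else 1 with hpt
    set L : MvPolynomial (Fin (n+1)) F →ₗ[F] F :=
      (aeval pt).toLinearMap ∘ₗ (pderiv (⟨k, hkn⟩ : Fin (n+1))).toLinearMap with hL
    have hLapp : ∀ x, L x = aeval pt (pderiv (⟨k, hkn⟩ : Fin (n+1)) x) := fun x => rfl
    have hker : Submodule.span F
        ((fun p => Qpoly F n p * Qpoly F n (m + n + 1 - p)) '' (Set.Iio m))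
        ≤ LinearMap.ker L := by
      rw [Submodule.span_le]
      rintro x ⟨p, hp, rfl⟩
      have hp' : p < m := hp
      simp only [SetLike.mem_coe, LinearMap.mem_ker, hLapp, pderiv_mul, map_add, map_mul]
      have hz1 : aeval pt (Qpoly F n p) = 0 := by
        rw [hpt, qeval_eq]
        norm_cast
        refine Finset.sum_eq_zero fun i _ => Finset.sum_eq_zero fun j _ => ?_
        rw [if_neg (by omega)]
      have hz2 : aeval pt (pderiv (⟨k, hkn⟩ : Fin (n+1)) (Qpoly F n p)) = 0 := by
        rw [hpt, qderiv_eq]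
        norm_cast
        refine Finset.sum_eq_zero fun i _ => Finset.sum_eq_zero fun j _ => ?_
        split_ifs <;> omega
      rw [hz1, hz2, zero_mul, zero_mul, add_zero]
    have h0 : L (Qpoly F n m * Qpoly F n (n + 1)) = 0 := hker hmem
    rw [hLapp, pderiv_mul, map_add, map_mul, map_mul] at h0
    have hz1 : aeval pt (Qpoly F n m) = 0 := by
      rw [hpt, qeval_eq]
      norm_cast
      refine Finset.sum_eq_zero fun i _ => Finset.sum_eq_zero fun j _ => ?_
      rw [if_neg (by omega)]
    rw [hz1, zero_mul, add_zero] at h0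
    have h1 : aeval pt (pderiv (⟨k, hkn⟩ : Fin (n+1)) (Qpoly F n m)) ≠ 0 := by
      rw [hpt, qderiv_eq]
      rw [Nat.cast_ne_zero]
      intro h
      rw [Finset.sum_eq_zero_iff] at h
      have h2 := h ⟨k + 1, by omega⟩ (Finset.mem_univ _)
      rw [Finset.sum_eq_zero_iff] at h2
      have h3 := h2 ⟨k, by omega⟩ (Finset.mem_univ _)
      simp only [Fin.val_mk, and_true, le_refl, if_true] at h3
      split_ifs at h3 <;> omega
    have h2 : aeval pt (Qpoly F n (n+1)) ≠ 0 := by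
      rw [hpt, qeval_eq]
      exact_mod_cast Nat.cast_ne_zero.mpr
        (nsum_ne_zero n (n+1) (k+1) (k+1) (n-k)
          (by omega) (by omega) (by omega) (by omega) (by omega))
    exact mul_ne_zero h1 h2 h0
end

section
/- Let U be an infinite-dimensional subspace of a Lie algebra over a field such that the span of all brackets [U, U] is finite-dimensional. Then every element of U is contained in an infinite-dimensional abelian Lie subalgebra whose underlying space is contained in U. -/
open Module

section Aux

variable {F : Type*} [Field F] {L : Type*} [LieRing L] [LieAlgebra F L]

/-- Key finite-codimension step: if `W ≤ U` is infinite-dimensional and `[U,U]` spans a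
finite-dimensional space, then for `c ∈ U` the centralizer of `c` inside `W` is still
infinite-dimensional. -/
lemma stmt8_aux_step (U : Submodule F L)
    (hbr : Module.Finite F
      (Submodule.span F {x : L | ∃ a ∈ U, ∃ b ∈ U, x = ⁅a, b⁆}))
    (W : Submodule F L) (hWU : W ≤ U) (hW : ¬ Module.Finite F W)
    (c : L) (hc : c ∈ U) :
    ¬ Module.Finite F ↥(W ⊓ LinearMap.ker (LieAlgebra.ad F L c)) := by
  intro hfin
  apply hW
  set B := Submodule.span F {x : L | ∃ a ∈ U, ∃ b ∈ U, x = ⁅a, b⁆} with hB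
  let f : ↥W →ₗ[F] L := (LieAlgebra.ad F L c).comp W.subtype
  have hrange : LinearMap.range f ≤ B := by
    rintro x ⟨⟨w, hw⟩, rfl⟩
    exact Submodule.subset_span ⟨c, hc, w, hWU hw, by
      simp [f, LieAlgebra.ad_apply]⟩
  have hker : LinearMap.ker f
      = Submodule.comap W.subtype (W ⊓ LinearMap.ker (LieAlgebra.ad F L c)) := by
    ext ⟨w, hw⟩
    simp [f, hw]
  have h1 : Module.rank F (LinearMap.ker f) < Cardinal.aleph0 := by
    rw [hker]
    have e := Submodule.comapSubtypeEquivOfLe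
      (inf_le_left : W ⊓ LinearMap.ker (LieAlgebra.ad F L c) ≤ W)
    rw [e.rank_eq]
    exact Module.rank_lt_aleph0_iff.2 hfin
  have h2 : Module.rank F (LinearMap.range f) < Cardinal.aleph0 :=
    lt_of_le_of_lt (Submodule.rank_mono hrange) (Module.rank_lt_aleph0_iff.2 hbr)
  rw [← Module.rank_lt_aleph0_iff, ← LinearMap.rank_range_add_rank_ker f]
  exact Cardinal.add_lt_aleph0 h2 h1

lemma stmt8_aux_exists (W S : Submodule F L) (hW : ¬ Module.Finite F W)
    (hS : Module.Finite F S) : ∃ x, x ∈ W ∧ x ∉ S := by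
  by_contra h
  push_neg at h
  haveI : Module.Finite F S := hS
  exact hW (Submodule.finiteDimensional_of_le (fun x hx => h x hx))

end Aux

/-- If `U` is an infinite-dimensional subspace of a Lie algebra over a field such that the
span of all brackets `[U,U]` is finite-dimensional, then every element of `U` is contained
in an infinite-dimensional abelian Lie subalgebra whose underlying set is contained in `U`. -/
theorem stmt8 (F : Type*) [Field F] (L : Type*) [LieRing L] [LieAlgebra F L]
    (U : Submodule F L)
    (hinf : ¬ Module.Finite F U)
    (hbr : Module.Finite F
      (Submodule.span F {x : L | ∃ a ∈ U, ∃ b ∈ U, x = ⁅a, b⁆}))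
    (a : L) (ha : a ∈ U) :
    ∃ A : LieSubalgebra F L,
      a ∈ A ∧ (A : Set L) ⊆ U ∧ IsLieAbelian A ∧ ¬ Module.Finite F A := by
  classical
  -- The state: an element, a working subspace, and the span of elements chosen so far.
  let St := L × Submodule F L × Submodule F L
  let Good : St → Prop := fun p =>
    p.2.1 ≤ U ∧ ¬ Module.Finite F p.2.1 ∧ Module.Finite F p.2.2 ∧
    p.2.1 ≤ LinearMap.ker (LieAlgebra.ad F L p.1) ∧ p.1 ∈ p.2.1 ∧ p.1 ∈ p.2.2
  have key : ∀ p : St, Good p → ∃ q : St, Good q ∧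
      q.1 ∈ p.2.1 ∧ q.1 ∉ p.2.2 ∧ q.2.1 ≤ p.2.1 ∧
      q.2.2 = p.2.2 ⊔ Submodule.span F {q.1} := by
    rintro ⟨x, W, S⟩ ⟨hWU, hWinf, hSfin, _hWk, _hxW, _hxS⟩
    obtain ⟨y, hyW, hyS⟩ := stmt8_aux_exists W S hWinf hSfin
    refine ⟨(y, W ⊓ LinearMap.ker (LieAlgebra.ad F L y), S ⊔ Submodule.span F {y}),
      ⟨le_trans inf_le_left hWU,
       stmt8_aux_step U hbr W hWU hWinf y (hWU hyW),
       by haveI := hSfin; infer_instance,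
       inf_le_right,
       ⟨hyW, by simp [LieAlgebra.ad_apply]⟩,
       Submodule.mem_sup_right (Submodule.mem_span_singleton_self y)⟩,
      hyW, hyS, inf_le_left, rfl⟩
  choose next hG h1 h2 h3 h4 using key
  -- Initial state
  have hGood0 : Good (a, U ⊓ LinearMap.ker (LieAlgebra.ad F L a), Submodule.span F {a}) := by
    refine ⟨inf_le_left, stmt8_aux_step U hbr U le_rfl hinf a ha, ?_, inf_le_right,
      ⟨ha, by simp [LieAlgebra.ad_apply]⟩, Submodule.mem_span_singleton_self a⟩
    infer_instance
  let seq : ℕ → {p : St // Good p} := fun n => Nat.rec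
    ⟨(a, U ⊓ LinearMap.ker (LieAlgebra.ad F L a), Submodule.span F {a}), hGood0⟩
    (fun _ q => ⟨next q.1 q.2, hG q.1 q.2⟩) n
  let x : ℕ → L := fun n => (seq n).1.1
  let W : ℕ → Submodule F L := fun n => (seq n).1.2.1
  let S : ℕ → Submodule F L := fun n => (seq n).1.2.2
  have hGn : ∀ n, Good ((seq n).1) := fun n => (seq n).2
  have hx0 : x 0 = a := rfl
  have hsucc : ∀ n, (seq (n + 1)).1 = next (seq n).1 (seq n).2 := fun n => rfl
  have hxW : ∀ n, x (n + 1) ∈ W n := fun n => h1 (seq n).1 (seq n).2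
  have hxS : ∀ n, x (n + 1) ∉ S n := fun n => h2 (seq n).1 (seq n).2
  have hWmono : ∀ n, W (n + 1) ≤ W n := fun n => h3 (seq n).1 (seq n).2
  have hSsucc : ∀ n, S (n + 1) = S n ⊔ Submodule.span F {x (n + 1)} :=
    fun n => h4 (seq n).1 (seq n).2
  -- W is antitone
  have hWle : ∀ n m, n ≤ m → W m ≤ W n := by
    intro n m hnm
    induction m with
    | zero => simp_all
    | succ k ih =>
      rcases Nat.lt_or_ge n (k + 1) with h | h
      · exact le_trans (hWmono k) (ih (Nat.lt_succ_iff.1 h))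
      · have : n = k + 1 := le_antisymm hnm h
        subst this; exact le_rfl
  -- S is monotone
  have hSle : ∀ n m, n ≤ m → S n ≤ S m := by
    intro n m hnm
    induction m with
    | zero => simp_all
    | succ k ih =>
      rcases Nat.lt_or_ge n (k + 1) with h | h
      · exact le_trans (ih (Nat.lt_succ_iff.1 h)) (by rw [hSsucc k]; exact le_sup_left)
      · have : n = k + 1 := le_antisymm hnm h
        subst this; exact le_rfl
  have hxWm : ∀ n m, n ≤ m → x m ∈ W n := fun n m hnm => hWle n m hnm (hGn m).2.2.2.2.1
  have hxU : ∀ n, x n ∈ U := fun n => (hGn n).1 (hGn n).2.2.2.2.1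
  -- pairwise commuting
  have hcommle : ∀ n m, n ≤ m → ⁅x n, x m⁆ = 0 := by
    intro n m hnm
    have := (hGn n).2.2.2.1 (hxWm n m hnm)
    simpa [LieAlgebra.ad_apply] using this
  have hcomm : ∀ n m, ⁅x n, x m⁆ = 0 := by
    intro n m
    rcases le_total n m with h | h
    · exact hcommle n m h
    · rw [← lie_skew, hcommle m n h, neg_zero]
  -- The abelian subalgebra
  let M : Submodule F L := Submodule.span F (Set.range x)
  have hMcomm : ∀ u ∈ M, ∀ v ∈ M, ⁅u, v⁆ = 0 := by
    intro u hu v hv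
    refine Submodule.span_induction₂ (p := fun u v _ _ => ⁅u, v⁆ = 0) ?_ ?_ ?_ ?_ ?_ ?_ ?_ hu hv
    · rintro _ _ ⟨n, rfl⟩ ⟨m, rfl⟩; exact hcomm n m
    · intro y _; simp
    · intro y _; simp
    · intro p q r _ _ _ hp hq; rw [add_lie, hp, hq, add_zero]
    · intro p q r _ _ _ hp hq; rw [lie_add, hp, hq, add_zero]
    · intro t p q _ _ hp; rw [smul_lie, hp, smul_zero]
    · intro t p q _ _ hp; rw [lie_smul, hp, smul_zero]
  let A : LieSubalgebra F L :=
    { M with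
      lie_mem' := fun {u v} hu hv => by
        have : ⁅u, v⁆ = 0 := hMcomm u hu v hv
        rw [this]; exact M.zero_mem }
  have hAM : (A : Submodule F L) = M := rfl
  refine ⟨A, ?_, ?_, ?_, ?_⟩
  · exact Submodule.subset_span ⟨0, hx0⟩
  · intro u hu
    exact Submodule.span_le.2 (by rintro _ ⟨n, rfl⟩; exact hxU n) hu
  · exact ⟨fun u v => Subtype.ext (hMcomm u.1 u.2 v.1 v.2)⟩
  · intro hfin
    haveI : Module.Finite F M := hfin
    -- each S n is inside M
    have hSM : ∀ n, S n ≤ M := by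
      intro n
      induction n with
      | zero =>
        have : (S 0 : Submodule F L) = Submodule.span F {a} := rfl
        rw [this, Submodule.span_le]
        rintro _ rfl
        exact Submodule.subset_span ⟨0, hx0⟩
      | succ k ih =>
        rw [hSsucc k, sup_le_iff]
        exact ⟨ih, Submodule.span_le.2 (by
          rintro _ rfl; exact Submodule.subset_span ⟨k + 1, rfl⟩)⟩
    haveI : ∀ n, Module.Finite F (S n) := fun n => (hGn n).2.2.1
    have hlt : ∀ n, S n < S (n + 1) := by
      intro n
      refine lt_of_le_of_ne (hSle n (n + 1) (Nat.le_succ n)) ?_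
      intro h
      exact hxS n (h ▸ (hGn (n + 1)).2.2.2.2.2)
    have hmono : StrictMono (fun n => finrank F (S n)) := by
      apply strictMono_nat_of_lt_succ
      intro n
      haveI : Module.Finite F (S (n + 1)) := (hGn (n + 1)).2.2.1
      exact Submodule.finrank_lt_finrank_of_lt (hlt n)
    have hub : ∀ n, finrank F (S n) ≤ finrank F M := fun n => Submodule.finrank_mono (hSM n)
    have h1' := hmono.le_apply (x := finrank F M + 1)
    have h2' := hub (finrank F M + 1)
    omega
end

section
/- Let V be an algebra of differential functions in one variable u which is a field, and consider the differential operator B = ∂ ∘ (1/u'') ∘ ∂ acting on V. Then the orthogonal complement of Span_C{1, u'} with respect to the pairing (f, P) ↦ ∫ fP (values in V/∂V) equals the image of B; that is, an element f ∈ V satisfies ∫ f = 0 and ∫ f u' = 0 if and only if f = ∂((1/u'')∂g) for some g ∈ V. -/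
/-- In a field of differential functions `V` in one variable `u`, with total derivative `d`
and `u'' = d u' ≠ 0`, the orthogonal complement of `Span_C {1, u'}` with respect to the
pairing `(f, P) ↦ ∫ f P` (with values in `V/∂V`) equals the image of the operator
`B = ∂ ∘ (1/u'') ∘ ∂`: an element `f ∈ V` satisfies `∫ f = 0` and `∫ f u' = 0`
(i.e. `f` and `f·u'` are total derivatives) if and only if `f = ∂((1/u'') ∂ g)` for
some `g ∈ V`. -/
theorem stmt9 (V : Type*) [Field V] (d : V → V)
    (hd_add : ∀ a b : V, d (a + b) = d a + d b)
    (hd_mul : ∀ a b : V, d (a * b) = d a * b + a * d b)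
    (u' : V) (hu'' : d u' ≠ 0) (f : V) :
    ((∃ g : V, f = d g) ∧ (∃ h : V, f * u' = d h)) ↔
      ∃ g : V, f = d ((d u')⁻¹ * d g) := by
  have hd0 : d 0 = 0 := by
    have := hd_add 0 0
    simp at this
    exact this
  have hd_neg : ∀ a : V, d (-a) = - d a := by
    intro a
    have := hd_add a (-a)
    simp [hd0] at this
    linear_combination -this
  have hd_sub : ∀ a b : V, d (a - b) = d a - d b := by
    intro a b
    rw [sub_eq_add_neg, hd_add, hd_neg, sub_eq_add_neg]
  constructor
  · rintro ⟨⟨g, hg⟩, ⟨h, hh⟩⟩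
    refine ⟨u' * g - h, ?_⟩
    have key : d (u' * g - h) = d u' * g := by
      rw [hd_sub, hd_mul, ← hh, hg]
      ring
    rw [key, inv_mul_cancel_left₀ hu'', hg]
  · rintro ⟨g, rfl⟩
    refine ⟨⟨(d u')⁻¹ * d g, rfl⟩, ⟨(d u')⁻¹ * d g * u' - g, ?_⟩⟩
    rw [hd_sub, hd_mul ((d u')⁻¹ * d g) u']
    have h2 : (d u')⁻¹ * d g * d u' = d g := by field_simp
    linear_combination -h2
end

section
/- Let V be an algebra of differential functions in ℓ variables, D = Σ_{s=0}^{n} A_s ∂^s a k×ℓ matrix differential operator with coefficients A_s ∈ Mat_{k×ℓ}(V) and A_n ≠ 0 (so its order |D| = n), and F ∈ V^ℓ. Then: (a) dord(DF) ≤ max{dord(D), dord(F) + n}; (b) if the leading coefficient A_n is a non-degenerate matrix and dord(F) + n > dord(D), then dord(DF) = dord(F) + n; (c) if A_n is non-degenerate and dord(DF) > dord(D), then dord(DF) = dord(F) + n. -/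
/-- The differential order of an element `f` of an algebra of differential functions with
partial derivatives `pd i n = ∂/∂u_i^{(n)}`: the supremum (in `WithBot ℕ`, with `⊥ = -∞`
for quasiconstants) of the `n` such that `pd i n f ≠ 0` for some `i`. -/
noncomputable def dordE {V : Type*} [CommRing V] {l : ℕ}
    (pd : Fin l → ℕ → V → V) (f : V) : WithBot ℕ :=
  sSup {d : WithBot ℕ | ∃ m : ℕ, d = (m : WithBot ℕ) ∧ ∃ i, pd i m f ≠ 0}

/-- The differential order of a vector `F ∈ V^k`: the maximum of the differential orders of
its entries. -/
noncomputable def dordVec {V : Type*} [CommRing V] {l : ℕ}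
    (pd : Fin l → ℕ → V → V) {k : ℕ} (F : Fin k → V) : WithBot ℕ :=
  Finset.univ.sup fun j => dordE pd (F j)

/-- The differential order of a matrix differential operator `D = Σ_{s=0}^n A_s ∂^s`:
the maximum of the differential orders of the entries of its coefficients. -/
noncomputable def dordOp {V : Type*} [CommRing V] {l : ℕ}
    (pd : Fin l → ℕ → V → V) {k n : ℕ}
    (A : Fin (n + 1) → Matrix (Fin k) (Fin l) V) : WithBot ℕ :=
  (Finset.univ : Finset (Fin (n + 1) × Fin k × Fin l)).sup
    fun x => dordE pd (A x.1 x.2.1 x.2.2)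

section Aux
variable {V : Type*} [CommRing V] {l : ℕ} {pd : Fin l → ℕ → V → V}

lemma my_pd_zero (hpd_add : ∀ i m (a b : V), pd i m (a + b) = pd i m a + pd i m b)
    (i : Fin l) (m : ℕ) : pd i m (0 : V) = 0 := by
  have h := hpd_add i m 0 0
  rw [add_zero] at h
  exact (left_eq_add.mp h)

lemma le_dordE_of_ne (hfin : ∀ f : V, ∃ Nf : ℕ, ∀ i m, Nf ≤ m → pd i m f = 0)
    {f : V} {i : Fin l} {m : ℕ} (h : pd i m f ≠ 0) : (m : WithBot ℕ) ≤ dordE pd f := by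
  obtain ⟨N, hN⟩ := hfin f
  refine le_csSup ⟨(N : WithBot ℕ), ?_⟩ ⟨m, rfl, i, h⟩
  rintro x ⟨m', rfl, i', hi'⟩
  have : m' ≤ N := by
    by_contra h'
    exact hi' (hN i' m' (le_of_not_ge h'))
  exact_mod_cast this

lemma dordE_le {f : V} {x : WithBot ℕ}
    (h : ∀ (i : Fin l) (m : ℕ), x < (m : WithBot ℕ) → pd i m f = 0) : dordE pd f ≤ x := by
  rcases Set.eq_empty_or_nonempty
    {d : WithBot ℕ | ∃ m : ℕ, d = (m : WithBot ℕ) ∧ ∃ i, pd i m f ≠ 0} with he | hne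
  · rw [dordE, he, WithBot.sSup_empty]; exact bot_le
  · refine csSup_le hne ?_
    rintro b ⟨m, rfl, i, hi⟩
    by_contra hb
    exact hi (h i m (lt_of_not_ge hb))

lemma pd_eq_zero_of_lt (hfin : ∀ f : V, ∃ Nf : ℕ, ∀ i m, Nf ≤ m → pd i m f = 0)
    {f : V} {i : Fin l} {m : ℕ} (h : dordE pd f < (m : WithBot ℕ)) : pd i m f = 0 := by
  by_contra hc
  exact absurd (le_dordE_of_ne hfin hc) (not_le.mpr h)

lemma le_dordVec {k : ℕ} (F : Fin k → V) (j : Fin k) :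
    dordE pd (F j) ≤ dordVec pd F :=
  Finset.le_sup (f := fun j => dordE pd (F j)) (Finset.mem_univ j)

lemma dordVec_le {k : ℕ} {F : Fin k → V} {x : WithBot ℕ}
    (h : ∀ j, dordE pd (F j) ≤ x) : dordVec pd F ≤ x :=
  Finset.sup_le fun j _ => h j

lemma pd_sum (hpd_add : ∀ i m (a b : V), pd i m (a + b) = pd i m a + pd i m b)
    (i : Fin l) (m : ℕ) {α : Type*} (s : Finset α) (f : α → V) :
    pd i m (∑ x ∈ s, f x) = ∑ x ∈ s, pd i m (f x) :=
  map_sum (AddMonoidHom.mk' (pd i m) (hpd_add i m)) f s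

variable {d : V → V}

lemma pd_iter_zero
    (hd_add : ∀ a b : V, d (a + b) = d a + d b)
    (hpd_add : ∀ i m (a b : V), pd i m (a + b) = pd i m a + pd i m b)
    (hcomm0 : ∀ i (f : V), pd i 0 (d f) = d (pd i 0 f))
    (hcommS : ∀ i m (f : V), pd i (m + 1) (d f) = d (pd i (m + 1) f) + pd i m f)
    (i : Fin l) :
    ∀ (s m : ℕ) (g : V), (∀ m', m ≤ m' + s → pd i m' g = 0) → pd i m (d^[s] g) = 0 := by
  have hd0 : d 0 = 0 := by
    have h := hd_add 0 0; rw [add_zero] at h; exact (left_eq_add.mp h)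
  intro s
  induction s with
  | zero => intro m g h; simpa using h m (by omega)
  | succ s ih =>
    intro m g h
    rw [Function.iterate_succ_apply']
    match m with
    | 0 => rw [hcomm0, ih 0 g (fun m' _ => h m' (by omega)), hd0]
    | m₀ + 1 =>
      rw [hcommS, ih (m₀ + 1) g (fun m' hm' => h m' (by omega)),
        ih m₀ g (fun m' hm' => h m' (by omega)), hd0, zero_add]

lemma pd_iter_lead
    (hd_add : ∀ a b : V, d (a + b) = d a + d b)
    (hpd_add : ∀ i m (a b : V), pd i m (a + b) = pd i m a + pd i m b)
    (hcomm0 : ∀ i (f : V), pd i 0 (d f) = d (pd i 0 f))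
    (hcommS : ∀ i m (f : V), pd i (m + 1) (d f) = d (pd i (m + 1) f) + pd i m f)
    (i : Fin l) (N : ℕ) (g : V) (h : ∀ m', N < m' → pd i m' g = 0) :
    ∀ s : ℕ, pd i (N + s) (d^[s] g) = pd i N g := by
  have hd0 : d 0 = 0 := by
    have h := hd_add 0 0; rw [add_zero] at h; exact (left_eq_add.mp h)
  intro s
  induction s with
  | zero => simp
  | succ s ih =>
    rw [Function.iterate_succ_apply', show N + (s + 1) = (N + s) + 1 from rfl, hcommS,
      pd_iter_zero hd_add hpd_add hcomm0 hcommS i s (N + s + 1) g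
        (fun m' hm' => h m' (by omega)), hd0, zero_add, ih]

lemma dordVec_cases (hfin : ∀ f : V, ∃ Nf : ℕ, ∀ i m, Nf ≤ m → pd i m f = 0)
    {k : ℕ} (F : Fin k → V) :
    (dordVec pd F = ⊥) ∨
    ∃ N : ℕ, dordVec pd F = (N : WithBot ℕ) ∧ (∃ j i, pd i N (F j) ≠ 0) ∧
      ∀ j i m, N < m → pd i m (F j) = 0 := by
  classical
  by_cases hz : ∀ (j : Fin k) i m, pd i m (F j) = 0
  · left
    refine le_bot_iff.mp (Finset.sup_le fun j _ => dordE_le fun i m _ => hz j i m)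
  · right
    push_neg at hz
    obtain ⟨j₀, i₀, m₀, hm₀⟩ := hz
    set Nb : Fin k → ℕ := fun j => (hfin (F j)).choose with hNb
    have hNbs : ∀ j i m, Nb j ≤ m → pd i m (F j) = 0 := fun j => (hfin (F j)).choose_spec
    set B : ℕ := Finset.univ.sup Nb with hB
    set P : ℕ → Prop := fun m => ∃ j i, pd i m (F j) ≠ 0 with hP
    have hm₀B : m₀ ≤ B := by
      have h1 : m₀ < Nb j₀ := by
        by_contra h'
        exact hm₀ (hNbs j₀ i₀ m₀ (le_of_not_gt h'))
      exact h1.le.trans (Finset.le_sup (Finset.mem_univ j₀))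
    set N : ℕ := Nat.findGreatest P B with hNdef
    have hPN : P N := Nat.findGreatest_spec hm₀B ⟨j₀, i₀, hm₀⟩
    have hvan : ∀ j i m, N < m → pd i m (F j) = 0 := by
      intro j i m hm
      by_cases hmB : m ≤ B
      · have := Nat.findGreatest_is_greatest hm hmB
        simp only [hP, not_exists, not_not] at this
        exact this j i
      · exact hNbs j i m (le_trans (Finset.le_sup (Finset.mem_univ j)) (by omega))
    obtain ⟨j₁, i₁, h₁⟩ := hPN
    refine ⟨N, le_antisymm ?_ ?_, ⟨j₁, i₁, h₁⟩, hvan⟩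
    · refine Finset.sup_le fun j _ => dordE_le fun i m hm => hvan j i m (by exact_mod_cast hm)
    · exact (le_dordE_of_ne hfin h₁).trans (le_dordVec F j₁)

end Aux

/-- Let `V` be an algebra of differential functions in `l` variables (a domain), let
`D = Σ_{s=0}^n A_s ∂^s` be a `k × l` matrix differential operator with `A_n ≠ 0` (so its
order is `n`), and let `F ∈ V^l`.  Then:
(a) `dord(DF) ≤ max (dord D) (dord F + n)`;
(b) if the leading coefficient `A_n` is non-degenerate and `dord D < dord F + n`, then
`dord(DF) = dord F + n`;
(c) if `A_n` is non-degenerate and `dord D < dord(DF)`, then `dord(DF) = dord F + n`. -/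
theorem stmt11 (V : Type*) [CommRing V] [IsDomain V] (l k : ℕ)
    (d : V → V) (pd : Fin l → ℕ → V → V)
    (hd_add : ∀ a b : V, d (a + b) = d a + d b)
    (hd_mul : ∀ a b : V, d (a * b) = d a * b + a * d b)
    (hpd_add : ∀ i m (a b : V), pd i m (a + b) = pd i m a + pd i m b)
    (hpd_mul : ∀ i m (a b : V), pd i m (a * b) = pd i m a * b + a * pd i m b)
    (hcomm0 : ∀ i (f : V), pd i 0 (d f) = d (pd i 0 f))
    (hcommS : ∀ i m (f : V), pd i (m + 1) (d f) = d (pd i (m + 1) f) + pd i m f)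
    (hpd_comm : ∀ i m i' m' (f : V), pd i m (pd i' m' f) = pd i' m' (pd i m f))
    (hfin : ∀ f : V, ∃ Nf : ℕ, ∀ i m, Nf ≤ m → pd i m f = 0)
    (n : ℕ) (A : Fin (n + 1) → Matrix (Fin k) (Fin l) V)
    (hAn : A (Fin.last n) ≠ 0)
    (F : Fin l → V) :
    (dordVec pd (fun i => ∑ s : Fin (n + 1), ∑ j : Fin l, A s i j * d^[(s : ℕ)] (F j)) ≤
        max (dordOp pd A) (dordVec pd F + (n : WithBot ℕ))) ∧
    ((∀ x : Fin l → V, (A (Fin.last n)).mulVec x = 0 → x = 0) →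
      dordOp pd A < dordVec pd F + (n : WithBot ℕ) →
      dordVec pd (fun i => ∑ s : Fin (n + 1), ∑ j : Fin l, A s i j * d^[(s : ℕ)] (F j)) =
        dordVec pd F + (n : WithBot ℕ)) ∧
    ((∀ x : Fin l → V, (A (Fin.last n)).mulVec x = 0 → x = 0) →
      dordOp pd A <
        dordVec pd (fun i => ∑ s : Fin (n + 1), ∑ j : Fin l, A s i j * d^[(s : ℕ)] (F j)) →
      dordVec pd (fun i => ∑ s : Fin (n + 1), ∑ j : Fin l, A s i j * d^[(s : ℕ)] (F j)) =
        dordVec pd F + (n : WithBot ℕ)) := by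
  classical
  set G : Fin k → V := fun i => ∑ s : Fin (n + 1), ∑ j : Fin l, A s i j * d^[(s : ℕ)] (F j)
    with hG
  have hGi : ∀ i, G i = ∑ s : Fin (n + 1), ∑ j : Fin l, A s i j * d^[(s : ℕ)] (F j) := by
    intro i; rw [hG]
  -- part (a)
  have ha : dordVec pd G ≤ max (dordOp pd A) (dordVec pd F + (n : WithBot ℕ)) := by
    refine dordVec_le fun i₀ => dordE_le fun i m hm => ?_
    rw [hGi, pd_sum hpd_add]
    refine Finset.sum_eq_zero fun s _ => ?_
    rw [pd_sum hpd_add]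
    refine Finset.sum_eq_zero fun j _ => ?_
    rw [hpd_mul]
    have h1 : pd i m (A s i₀ j) = 0 := by
      refine pd_eq_zero_of_lt hfin (lt_of_le_of_lt ?_ (lt_of_le_of_lt (le_max_left _ _) hm))
      exact Finset.le_sup (f := fun x : Fin (n + 1) × Fin k × Fin l =>
        dordE pd (A x.1 x.2.1 x.2.2)) (Finset.mem_univ (s, i₀, j))
    have h2 : pd i m (d^[(s : ℕ)] (F j)) = 0 := by
      refine pd_iter_zero hd_add hpd_add hcomm0 hcommS i (s : ℕ) m (F j) fun m' hm' => ?_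
      refine pd_eq_zero_of_lt hfin (lt_of_le_of_lt (le_dordVec F j) ?_)
      have hsn : (s : ℕ) ≤ n := Nat.lt_succ_iff.mp s.isLt
      have hmn : (m : WithBot ℕ) ≤ ((m' + n : ℕ) : WithBot ℕ) := by
        exact_mod_cast (by omega : m ≤ m' + n)
      have h4 : dordVec pd F + (n : WithBot ℕ) < ((m' + n : ℕ) : WithBot ℕ) :=
        lt_of_lt_of_le (lt_of_le_of_lt (le_max_right _ _) hm) hmn
      rw [Nat.cast_add] at h4
      exact lt_of_add_lt_add_right h4
    rw [h1, h2, zero_mul, mul_zero, add_zero]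
  -- part (b)
  have hb : (∀ x : Fin l → V, (A (Fin.last n)).mulVec x = 0 → x = 0) →
      dordOp pd A < dordVec pd F + (n : WithBot ℕ) →
      dordVec pd G = dordVec pd F + (n : WithBot ℕ) := by
    intro hnd hlt
    rcases dordVec_cases hfin F with hbot | ⟨N, hN, ⟨j₀, i₀, hw⟩, hvan⟩
    · rw [hbot, WithBot.bot_add] at hlt
      exact absurd hlt (not_lt_bot)
    · have hlt' : dordOp pd A < ((N + n : ℕ) : WithBot ℕ) := by
        rw [hN, ← Nat.cast_add] at hlt; exact hlt
      have hA0 : ∀ (s : Fin (n + 1)) (i : Fin k) (j : Fin l), pd i₀ (N + n) (A s i j) = 0 := by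
        intro s i j
        refine pd_eq_zero_of_lt hfin (lt_of_le_of_lt ?_ hlt')
        exact Finset.le_sup (f := fun x : Fin (n + 1) × Fin k × Fin l =>
          dordE pd (A x.1 x.2.1 x.2.2)) (Finset.mem_univ (s, i, j))
      have key : ∀ i, pd i₀ (N + n) (G i) =
          (A (Fin.last n)).mulVec (fun j => pd i₀ N (F j)) i := by
        intro i
        rw [hGi, pd_sum hpd_add, Fin.sum_univ_castSucc]
        have hlow : ∀ s : Fin n,
            pd i₀ (N + n) (∑ j : Fin l,
              A (Fin.castSucc s) i j * d^[((Fin.castSucc s : Fin (n + 1)) : ℕ)] (F j)) = 0 := by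
          intro s
          rw [pd_sum hpd_add]
          refine Finset.sum_eq_zero fun j _ => ?_
          rw [hpd_mul, hA0, zero_mul, zero_add,
            pd_iter_zero hd_add hpd_add hcomm0 hcommS i₀ _ (N + n) (F j)
              (fun m' hm' => hvan j i₀ m' (by
                have hs := s.isLt
                simp only [Fin.coe_castSucc] at hm'
                omega)), mul_zero]
        rw [Finset.sum_eq_zero fun s _ => hlow s, zero_add, pd_sum hpd_add]
        have hl : ∀ j : Fin l,
            pd i₀ (N + n) (A (Fin.last n) i j * d^[((Fin.last n : Fin (n + 1)) : ℕ)] (F j)) =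
              A (Fin.last n) i j * pd i₀ N (F j) := by
          intro j
          rw [hpd_mul, hA0, zero_mul, zero_add]
          congr 1
          have hval : ((Fin.last n : Fin (n + 1)) : ℕ) = n := rfl
          rw [hval]
          exact pd_iter_lead hd_add hpd_add hcomm0 hcommS i₀ N (F j)
            (fun m' hm' => hvan j i₀ m' hm') n
        rw [Finset.sum_congr rfl fun j _ => hl j]
        simp [Matrix.mulVec, dotProduct]
      have hxne : (fun j => pd i₀ N (F j)) ≠ 0 := fun hc => hw (congrFun hc j₀)
      have hne : (A (Fin.last n)).mulVec (fun j => pd i₀ N (F j)) ≠ 0 :=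
        fun hc => hxne (hnd _ hc)
      obtain ⟨i₁, hi₁⟩ := Function.ne_iff.mp hne
      have hGne : pd i₀ (N + n) (G i₁) ≠ 0 := by
        rw [key i₁]; simpa using hi₁
      have hge : ((N + n : ℕ) : WithBot ℕ) ≤ dordVec pd G :=
        (le_dordE_of_ne hfin hGne).trans (le_dordVec G i₁)
      have heq : dordVec pd F + (n : WithBot ℕ) = ((N + n : ℕ) : WithBot ℕ) := by
        rw [hN, Nat.cast_add]
      exact le_antisymm (ha.trans_eq (max_eq_right hlt.le)) (heq ▸ hge)
  refine ⟨ha, hb, fun hnd hlt => hb hnd ?_⟩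
  by_contra hc
  push_neg at hc
  exact absurd (ha.trans (max_le le_rfl hc)) (not_le.mpr hlt)
end

section
/- Let V be a field of differential functions in one variable u, and x_1, x_3 ∈ C constants with x_1 ≠ 0. Then F ∈ V satisfies (x_1 ∂ ∘ (1/u') ∂ + x_3 u')F ∈ V_1 (differential order at most 1) if and only if F has differential order at most 0 and F' = (∂F/∂u) u'; i.e., F depends only on u (and x), not on any derivatives of u, and has no explicit x-dependence in the sense that its total derivative is (∂F/∂u)u'. -/
/-!
The partial derivatives `∂/∂u^{(k)}` are derivations `D k`, and the elements of differential
order at most `n` form a subfield `V_n`. The total derivative `d` maps `V_n` into `V_{n+1}`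
with `D (n + 1) (d f) = D n f`, so for `F ∈ V_n`, `a = u' ∈ V_1` and constants `x₁, x₃`,
`D (n + 2) (x₁ d(a⁻¹ dF) + x₃ a F) = x₁ (D (n + 1) a⁻¹ · dF + a⁻¹ D n F)`.
For `n ≥ 1` the first term vanishes, so if the operator lands in `V_1` then `D n F = 0` and the
order of `F` drops step by step to `0`. For `n = 0` we have `D 1 a⁻¹ = -a⁻²`, and the vanishing
reads `F' = (D 0 F) a`.
-/

section

variable {V : Type*} [Field V]

def derivationOfLeibniz (δ : V → V) (hadd : ∀ a b, δ (a + b) = δ a + δ b)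
    (hmul : ∀ a b, δ (a * b) = δ a * b + a * δ b) : Derivation ℤ V V :=
  Derivation.mk' (AddMonoidHom.mk' δ hadd).toIntLinearMap fun a b => by
    change δ (a * b) = a * δ b + b * δ a
    rw [hmul]
    ring

def diffOrderLE (D : ℕ → Derivation ℤ V V) (n : ℕ) : Subfield V where
  carrier := {f | ∀ k, n < k → D k f = 0}
  zero_mem' _ _ := map_zero _
  one_mem' _ _ := Derivation.map_one_eq_zero _
  add_mem' ha hb k hk := by rw [map_add, ha k hk, hb k hk, add_zero]
  mul_mem' ha hb k hk := by
    rw [Derivation.leibniz, ha k hk, hb k hk, smul_zero, smul_zero, add_zero]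
  neg_mem' ha k hk := by rw [map_neg, ha k hk, neg_zero]
  inv_mem' _ ha k hk := by rw [Derivation.leibniz_inv, ha k hk, smul_zero]

def IsTotalDerivative (D : ℕ → Derivation ℤ V V) (d : V →+ V) : Prop :=
  ∀ k f, D (k + 1) (d f) = d (D (k + 1) f) + D k f

def secondOrderOp (d : V →+ V) (x₁ x₃ a F : V) : V := x₁ * d (a⁻¹ * d F) + x₃ * a * F

variable {D : ℕ → Derivation ℤ V V} {d : V →+ V} {m n : ℕ} {f x₁ x₃ a F : V}

theorem diffOrderLE_mono (h : m ≤ n) : diffOrderLE D m ≤ diffOrderLE D n :=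
  fun _ hf k hk => hf k (h.trans_lt hk)

theorem mem_diffOrderLE_of_succ (hf : f ∈ diffOrderLE D (n + 1)) (h : D (n + 1) f = 0) :
    f ∈ diffOrderLE D n := by
  intro k hk
  rcases (Nat.succ_le_of_lt hk).eq_or_lt with rfl | hk'
  · exact h
  · exact hf k hk'

theorem apply_mem_diffOrderLE (hcomm : ∀ j k f, D j (D k f) = D k (D j f))
    (hf : f ∈ diffOrderLE D n) : D m f ∈ diffOrderLE D n := by
  intro k hk
  rw [hcomm, hf k hk, map_zero]

theorem IsTotalDerivative.apply_succ_of_mem (hd : IsTotalDerivative D d)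
    (hf : f ∈ diffOrderLE D n) : D (n + 1) (d f) = D n f := by
  rw [hd, hf (n + 1) n.lt_succ_self, map_zero, zero_add]

theorem IsTotalDerivative.map_mem_diffOrderLE_succ (hd : IsTotalDerivative D d)
    (hf : f ∈ diffOrderLE D n) : d f ∈ diffOrderLE D (n + 1) := by
  intro k hk
  obtain ⟨j, rfl⟩ : ∃ j, k = j + 1 := ⟨k - 1, by omega⟩
  rw [hd, hf _ (by omega), hf _ (by omega), map_zero, add_zero]

theorem IsTotalDerivative.apply_add_two_secondOrderOp (hd : IsTotalDerivative D d)
    (hx₁ : x₁ ∈ diffOrderLE D 0) (hx₃ : x₃ ∈ diffOrderLE D 0) (ha : a ∈ diffOrderLE D 1)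
    (hF : F ∈ diffOrderLE D n) :
    D (n + 2) (secondOrderOp d x₁ x₃ a F) = x₁ * (D (n + 1) a⁻¹ * d F + a⁻¹ * D n F) := by
  have ha' : a ∈ diffOrderLE D (n + 1) := diffOrderLE_mono (by omega) ha
  have hdF : d F ∈ diffOrderLE D (n + 1) := hd.map_mem_diffOrderLE_succ hF
  have hlower : x₃ * a * F ∈ diffOrderLE D (n + 1) :=
    mul_mem (mul_mem (diffOrderLE_mono (by omega) hx₃) ha') (diffOrderLE_mono (by omega) hF)
  have hinner : a⁻¹ * d F ∈ diffOrderLE D (n + 1) := mul_mem (inv_mem ha') hdF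
  rw [secondOrderOp, map_add, hlower _ (by omega), Derivation.leibniz, hx₁ _ (by omega),
    hd.apply_succ_of_mem hinner, Derivation.leibniz, hd.apply_succ_of_mem hF]
  simp only [smul_eq_mul]
  ring

theorem mem_diffOrderLE_zero_of_secondOrderOp_mem
    (hd : IsTotalDerivative D d) (hx₁₀ : x₁ ≠ 0)
    (hx₁ : x₁ ∈ diffOrderLE D 0) (hx₃ : x₃ ∈ diffOrderLE D 0) (ha : a ∈ diffOrderLE D 1)
    (ha₀ : a ≠ 0) (hop : secondOrderOp d x₁ x₃ a F ∈ diffOrderLE D 1)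
    (hF : F ∈ diffOrderLE D n) : F ∈ diffOrderLE D 0 := by
  induction n with
  | zero => exact hF
  | succ n ih =>
    refine ih (mem_diffOrderLE_of_succ hF ?_)
    have htop := hd.apply_add_two_secondOrderOp hx₁ hx₃ ha hF
    rw [hop _ (by omega), inv_mem ha _ (by omega), zero_mul, zero_add] at htop
    simpa [hx₁₀, ha₀] using htop.symm

theorem map_eq_of_secondOrderOp_mem (hd : IsTotalDerivative D d)
    (hx₁₀ : x₁ ≠ 0) (hx₁ : x₁ ∈ diffOrderLE D 0) (hx₃ : x₃ ∈ diffOrderLE D 0)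
    (ha : a ∈ diffOrderLE D 1) (ha₁ : D 1 a = 1)
    (hop : secondOrderOp d x₁ x₃ a F ∈ diffOrderLE D 1) (hF : F ∈ diffOrderLE D 0) :
    d F = D 0 F * a := by
  have ha₀ : a ≠ 0 := by rintro rfl; simp at ha₁
  have htop := hd.apply_add_two_secondOrderOp hx₁ hx₃ ha hF
  rw [hop _ (by omega), Derivation.leibniz_inv, ha₁, smul_eq_mul, mul_one] at htop
  have h := (mul_eq_zero.mp htop.symm).resolve_left hx₁₀
  field_simp at h
  linear_combination -h

theorem secondOrderOp_mem_of_map_eq (hd : IsTotalDerivative D d)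
    (hcomm : ∀ j k f, D j (D k f) = D k (D j f))
    (hx₁ : x₁ ∈ diffOrderLE D 0) (hx₃ : x₃ ∈ diffOrderLE D 0) (ha : a ∈ diffOrderLE D 1)
    (ha₀ : a ≠ 0) (hF : F ∈ diffOrderLE D 0) (hdF : d F = D 0 F * a) :
    secondOrderOp d x₁ x₃ a F ∈ diffOrderLE D 1 := by
  have hinner : a⁻¹ * d F = D 0 F := by rw [hdF]; field_simp
  rw [secondOrderOp, hinner]
  refine add_mem (mul_mem (diffOrderLE_mono zero_le_one hx₁) ?_) ?_
  · exact hd.map_mem_diffOrderLE_succ (apply_mem_diffOrderLE hcomm hF)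
  · exact mul_mem (mul_mem (diffOrderLE_mono zero_le_one hx₃) ha)
      (diffOrderLE_mono zero_le_one hF)

theorem secondOrderOp_mem_diffOrderLE_one_iff
    (hd : IsTotalDerivative D d) (hcomm : ∀ j k f, D j (D k f) = D k (D j f))
    (hfin : ∀ f, ∃ N, f ∈ diffOrderLE D N)
    (hx₁₀ : x₁ ≠ 0) (hx₁ : x₁ ∈ diffOrderLE D 0) (hx₃ : x₃ ∈ diffOrderLE D 0)
    (ha : a ∈ diffOrderLE D 1) (ha₁ : D 1 a = 1) :
    secondOrderOp d x₁ x₃ a F ∈ diffOrderLE D 1 ↔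
      F ∈ diffOrderLE D 0 ∧ d F = D 0 F * a := by
  have ha₀ : a ≠ 0 := by rintro rfl; simp at ha₁
  refine ⟨fun hop => ?_, fun ⟨hF, hdF⟩ =>
    secondOrderOp_mem_of_map_eq hd hcomm hx₁ hx₃ ha ha₀ hF hdF⟩
  obtain ⟨N, hN⟩ := hfin F
  have hF := mem_diffOrderLE_zero_of_secondOrderOp_mem hd hx₁₀ hx₁ hx₃ ha ha₀ hop hN
  exact ⟨hF, map_eq_of_secondOrderOp_mem hd hx₁₀ hx₁ hx₃ ha ha₁ hop hF⟩

end

theorem stmt13_general (V : Type*) [Field V]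
    (d : V → V) (pd : ℕ → V → V) (u : ℕ → V)
    (hd_add : ∀ a b : V, d (a + b) = d a + d b)
    (hpd_add : ∀ n (a b : V), pd n (a + b) = pd n a + pd n b)
    (hpd_mul : ∀ n (a b : V), pd n (a * b) = pd n a * b + a * pd n b)
    (hcommS : ∀ n (f : V), pd (n + 1) (d f) = d (pd (n + 1) f) + pd n f)
    (hpd_comm : ∀ m n (f : V), pd m (pd n f) = pd n (pd m f))
    (hfin : ∀ f : V, ∃ N : ℕ, ∀ n, N ≤ n → pd n f = 0)
    (hpdu : ∀ m n, pd m (u n) = if m = n then 1 else 0)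
    (x1 x3 : V)
    (hx1q : ∀ n, pd n x1 = 0) (hx3q : ∀ n, pd n x3 = 0)
    (hx1 : x1 ≠ 0) (F : V) :
    (∀ n, 2 ≤ n → pd n (x1 * d ((u 1)⁻¹ * d F) + x3 * u 1 * F) = 0) ↔
      ((∀ n, 1 ≤ n → pd n F = 0) ∧ d F = pd 0 F * u 1) := by
  let D n := derivationOfLeibniz (pd n) (hpd_add n) (hpd_mul n)
  have hu : u 1 ∈ diffOrderLE D 1 := fun k hk => (hpdu k 1).trans (if_neg hk.ne')
  have hu₁ : D 1 (u 1) = 1 := (hpdu 1 1).trans (if_pos rfl)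
  have hfin' : ∀ f, ∃ N, f ∈ diffOrderLE D N :=
    fun f => (hfin f).imp fun N hN k hk => hN k hk.le
  exact secondOrderOp_mem_diffOrderLE_one_iff (D := D) (d := AddMonoidHom.mk' d hd_add)
    hcommS hpd_comm hfin' hx1 (fun k _ => hx1q k) (fun k _ => hx3q k) hu hu₁

/-- Let `V` be a field of differential functions in one variable `u`, and let `x₁, x₃` be
constants with `x₁ ≠ 0`.  Then `F ∈ V` satisfies
`(x₁ ∂ ∘ (1/u') ∘ ∂ + x₃ u') F ∈ V₁` (differential order at most `1`) if and only if `F`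
has differential order at most `0` and `F' = (∂F/∂u) u'`. -/
theorem stmt13 (V : Type*) [Field V] [CharZero V]
    (d : V → V) (pd : ℕ → V → V) (u : ℕ → V)
    (hd_add : ∀ a b : V, d (a + b) = d a + d b)
    (hd_mul : ∀ a b : V, d (a * b) = d a * b + a * d b)
    (hpd_add : ∀ n (a b : V), pd n (a + b) = pd n a + pd n b)
    (hpd_mul : ∀ n (a b : V), pd n (a * b) = pd n a * b + a * pd n b)
    (hcomm0 : ∀ f : V, pd 0 (d f) = d (pd 0 f))
    (hcommS : ∀ n (f : V), pd (n + 1) (d f) = d (pd (n + 1) f) + pd n f)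
    (hpd_comm : ∀ m n (f : V), pd m (pd n f) = pd n (pd m f))
    (hfin : ∀ f : V, ∃ N : ℕ, ∀ n, N ≤ n → pd n f = 0)
    (hdu : ∀ n, d (u n) = u (n + 1))
    (hpdu : ∀ m n, pd m (u n) = if m = n then 1 else 0)
    (x1 x3 : V)
    (hx1c : d x1 = 0) (hx3c : d x3 = 0)
    (hx1q : ∀ n, pd n x1 = 0) (hx3q : ∀ n, pd n x3 = 0)
    (hx1 : x1 ≠ 0) (F : V) :
    (∀ n, 2 ≤ n → pd n (x1 * d ((u 1)⁻¹ * d F) + x3 * u 1 * F) = 0) ↔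
      ((∀ n, 1 ≤ n → pd n F = 0) ∧ d F = pd 0 F * u 1) :=
  stmt13_general V d pd u hd_add hpd_add hpd_mul hcommS hpd_comm hfin hpdu x1 x3 hx1q hx3q hx1 F
end

section
/- In the algebra of differential polynomials in one variable u over a field of characteristic zero, the operators K₁ = ∂ and the skew-adjoint non-local operator H(λ) = u'(λ+∂)^{-1}u' (Sokolov's structure, as a λ-bracket {u_λ u}_H = u'(λ+∂)^{-1}u') satisfy the compatibility identity: expanding all expressions as formal series, {u_λ H(μ)}_{K₁} − {u_μ H(λ)}_{K₁} = {H(λ)_{λ+μ} u}_{K₁}, where {u_λ u}_{K₁} = λ. Concretely, the identity reads λ²(∂+μ)^{-1}u' − μ²(∂+λ)^{-1}u' + u'(λ+μ)^{-1}(λ² − μ²) = (λ+μ+∂)²(−(∂+λ)^{-1}u' + (∂+μ)^{-1}u'), as an identity in V_{λ,μ} = V[[λ^{-1}, μ^{-1}, (λ+μ)^{-1}]][λ,μ]. -/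
noncomputable section

variable {V : Type*} [CommRing V]

/-- `u^{(n)} = ∂ⁿ u`. -/
def uDer (d : V → V) (u : V) (n : ℕ) : V := d^[n] u

/-- The coefficient of `λ^a μ^b` in the expansion (in `V((λ⁻¹))((μ⁻¹))`) of the left-hand
side `λ²(∂+μ)⁻¹u' − μ²(∂+λ)⁻¹u' + u'(λ+μ)⁻¹(λ² − μ²)` of the compatibility identity for
the GFZ structure `K₁ = ∂` and Sokolov's structure `H(λ) = u'(λ+∂)⁻¹u'`; here
`(∂+μ)⁻¹u' = Σ_{n≥0} (−1)ⁿ u^{(n+1)} μ^{−n−1}` and `u'(λ+μ)⁻¹(λ²−μ²) = u'λ − u'μ`. -/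
def lhs14 (d : V → V) (u : V) (a b : ℤ) : V :=
  (if a = 2 ∧ b ≤ -1 then ((-1 : ℤ) ^ (-b - 1).toNat) • uDer d u (-b).toNat else 0)
    - (if b = 2 ∧ a ≤ -1 then ((-1 : ℤ) ^ (-a - 1).toNat) • uDer d u (-a).toNat else 0)
    + (if a = 1 ∧ b = 0 then uDer d u 1 else 0)
    - (if a = 0 ∧ b = 1 then uDer d u 1 else 0)

/-- The coefficient of `λ^a μ^b` of `X = −(∂+λ)⁻¹u' + (∂+μ)⁻¹u'`. -/
def Xexp (d : V → V) (u : V) (a b : ℤ) : V :=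
  (if b = 0 ∧ a ≤ -1 then -(((-1 : ℤ) ^ (-a - 1).toNat) • uDer d u (-a).toNat) else 0)
    + (if a = 0 ∧ b ≤ -1 then ((-1 : ℤ) ^ (-b - 1).toNat) • uDer d u (-b).toNat else 0)

/-- Application of `(λ + μ + ∂)` on the level of expansion coefficients. -/
def opL (d : V → V) (x : ℤ → ℤ → V) (a b : ℤ) : V :=
  x (a - 1) b + x a (b - 1) + d (x a b)

/-!
With `F(λ) = (∂+λ)⁻¹u'` one has `(λ+∂)F(λ) = u'`, so `X = F(μ) − F(λ)` satisfies
`(λ+μ+∂)X = λF(μ) − μF(λ)`, and applying `λ+μ+∂` once more gives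
`λ²F(μ) − μ²F(λ) + λu' − μu'`, the left-hand side. On coefficients, multiplication by `λ`
shifts the `λ`-exponent and `(λ+∂)F = u'` reads `f(a−1) + ∂f(a) = δ_{a,0} u'`.
-/

/-- The coefficient `f a` of `λ^a` in `F(λ) = (∂+λ)⁻¹u' = Σ_{n≥0} (−1)ⁿ u^{(n+1)} λ^{−n−1}`. -/
def resolventCoeff (d : V → V) (u : V) (a : ℤ) : V :=
  if a ≤ -1 then ((-1 : ℤ) ^ (-a - 1).toNat) • uDer d u (-a).toNat else 0

/-- `lambdaMul k g` is the coefficient array of `λᵏ · Σ_b g(b) μᵇ`. -/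
def lambdaMul (k : ℤ) (g : ℤ → V) (a b : ℤ) : V :=
  if a = k then g b else 0

/-- `muMul k g` is the coefficient array of `μᵏ · Σ_a g(a) λᵃ`. -/
def muMul (k : ℤ) (g : ℤ → V) (a b : ℤ) : V :=
  if b = k then g a else 0

theorem resolventCoeff_sub_one_add_map (d : V →+ V) (u : V) (a : ℤ) :
    resolventCoeff d u (a - 1) + d (resolventCoeff d u a) =
      (Pi.single 0 (uDer d u 1) : ℤ → V) a := by
  rcases lt_trichotomy a 0 with ha | rfl | ha
  · have h1 : (-(a - 1) - 1).toNat = (-a - 1).toNat + 1 := by omega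
    have h2 : (-(a - 1)).toNat = (-a).toNat + 1 := by omega
    rw [resolventCoeff, resolventCoeff, if_pos (by omega), if_pos (by omega), Pi.single_apply,
      if_neg ha.ne, map_zsmul, h1, h2, uDer, uDer, Function.iterate_succ_apply', pow_succ,
      mul_neg_one, neg_smul, neg_add_cancel]
  · simp [resolventCoeff]
  · simp [resolventCoeff, ha.ne', show ¬a ≤ -1 by omega, show ¬a - 1 ≤ -1 by omega]

theorem lambdaMul_zero_single_zero (x : V) :
    lambdaMul 0 (Pi.single 0 x) = muMul 0 (Pi.single 0 x) := by
  ext a b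
  simp only [lambdaMul, muMul, Pi.single_apply]
  split_ifs <;> simp_all

section opL

variable (d : V →+ V)

theorem opL_sub (x y : ℤ → ℤ → V) : opL d (x - y) = opL d x - opL d y := by
  ext a b
  simp only [opL, Pi.sub_apply, map_sub]
  abel

theorem opL_lambdaMul (k : ℤ) (g : ℤ → V) :
    opL d (lambdaMul k g) = lambdaMul (k + 1) g + lambdaMul k (fun b ↦ g (b - 1) + d (g b)) := by
  ext a b
  simp only [opL, lambdaMul, Pi.add_apply, apply_ite d, map_zero]
  split_ifs <;> first | omega | abel

theorem opL_muMul (k : ℤ) (g : ℤ → V) :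
    opL d (muMul k g) = muMul (k + 1) g + muMul k (fun a ↦ g (a - 1) + d (g a)) := by
  ext a b
  simp only [opL, muMul, Pi.add_apply, apply_ite d, map_zero]
  split_ifs <;> first | omega | abel

end opL

theorem Xexp_eq (d : V → V) (u : V) :
    Xexp d u = lambdaMul 0 (resolventCoeff d u) - muMul 0 (resolventCoeff d u) := by
  ext a b
  simp only [Xexp, lambdaMul, muMul, resolventCoeff, Pi.sub_apply, ← ite_and, sub_eq_add_neg,
    neg_ite, neg_zero, and_comm (a := b = 0)]
  exact add_comm _ _

theorem lhs14_eq (d : V → V) (u : V) :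
    lhs14 d u = lambdaMul 2 (resolventCoeff d u) - muMul 2 (resolventCoeff d u)
      + lambdaMul 1 (Pi.single 0 (uDer d u 1)) - muMul 1 (Pi.single 0 (uDer d u 1)) := by
  ext a b
  simp only [lhs14, lambdaMul, muMul, resolventCoeff, Pi.sub_apply, Pi.add_apply,
    Pi.single_apply, ← ite_and, and_comm (a := b = 1)]

theorem opL_Xexp (d : V →+ V) (u : V) :
    opL d (Xexp d u) = lambdaMul 1 (resolventCoeff d u) - muMul 1 (resolventCoeff d u) := by
  have hf := funext (resolventCoeff_sub_one_add_map d u)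
  rw [Xexp_eq, opL_sub, opL_lambdaMul, opL_muMul, hf, lambdaMul_zero_single_zero,
    add_sub_add_right_eq_sub, zero_add]

theorem opL_opL_Xexp (d : V →+ V) (u : V) : opL d (opL d (Xexp d u)) = lhs14 d u := by
  have hf := funext (resolventCoeff_sub_one_add_map d u)
  rw [opL_Xexp, opL_sub, opL_lambdaMul, opL_muMul, hf, lhs14_eq, one_add_one_eq_two]
  abel

theorem stmt14_general (d : V → V)
    (hd_add : ∀ a b : V, d (a + b) = d a + d b)
    (u : V) :
    ∀ a b : ℤ, lhs14 d u a b = opL d (opL d (Xexp d u)) a b := fun a b ↦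
  congrFun (congrFun (opL_opL_Xexp (AddMonoidHom.mk' d hd_add) u) a) b |>.symm

/-- In the algebra of differential polynomials in one variable `u` (here: any commutative
ring `V` with a derivation `d` and an element `u`), the compatibility identity
`{u_λ H(μ)}_{K₁} − {u_μ H(λ)}_{K₁} = {H(λ)_{λ+μ} u}_{K₁}` between `K₁ = ∂` and Sokolov's
non-local structure `H(λ) = u'(λ+∂)⁻¹u'` holds: concretely,
`λ²(∂+μ)⁻¹u' − μ²(∂+λ)⁻¹u' + u'(λ+μ)⁻¹(λ² − μ²) = (λ+μ+∂)²(−(∂+λ)⁻¹u' + (∂+μ)⁻¹u')`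
as an identity in `V_{λ,μ} = V[[λ⁻¹,μ⁻¹,(λ+μ)⁻¹]][λ,μ]`, i.e. the expansion coefficients
of the two sides agree. -/
theorem stmt14 (d : V → V)
    (hd_add : ∀ a b : V, d (a + b) = d a + d b)
    (hd_mul : ∀ a b : V, d (a * b) = d a * b + a * d b)
    (u : V) :
    ∀ a b : ℤ, lhs14 d u a b = opL d (opL d (Xexp d u)) a b :=
  stmt14_general d hd_add u

end
end

section
/- In the field of differential functions in one variable u, the element F = u²/(2b_2) satisfies ∂∘(1/u'')∘∂ applied to F equals δ/δu of ∫(−(u')²/(2b_2)), and (a_1 ∂²∘(1/u'')∘∂ + ((a_2 + a_3(u')²)/u'')∂ − a_3u') applied to F equals (a_1/b_2)u''' + (a_2/b_2)u' + (a_3/(2b_2))(u')³. Consequently, for the compatible pair H = a_1∂ + a_2∂^{-1} + a_3u'∂^{-1}∘u' and K = b_2∂^{-1} (b_2 ≠ 0), the Hamiltonian functional ∫(−(u')²/(2b_2)) is H-associated to the vector field P_0 = (a_1/b_2)u''' + (a_2/b_2)u' + (a_3/(2b_2))(u')³, which for a_1 ≠ 0 gives the potential modified KdV equation u_t = u'''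 + εu' + α(u')³ after rescaling. -/
/-- In the field of differential functions in one variable `u`, the element
`F = (u')²/(2b₂)` satisfies `∂((1/u'') ∂F) = δ/δu ∫(−(u')²/(2b₂)) = u''/b₂`, and
`(a₁ ∂² ∘ (1/u'') ∘ ∂ + ((a₂ + a₃(u')²)/u'')∂ − a₃u')` applied to `F` equals
`(a₁/b₂)u''' + (a₂/b₂)u' + (a₃/(2b₂))(u')³`.  Consequently, for the compatible pair
`H = a₁∂ + a₂∂⁻¹ + a₃u'∂⁻¹∘u'`, `K = b₂∂⁻¹` (`b₂ ≠ 0`), the Hamiltonian functional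
`∫(−(u')²/(2b₂))` is `H`-associated to the vector field
`P₀ = (a₁/b₂)u''' + (a₂/b₂)u' + (a₃/(2b₂))(u')³` (potential mKdV for `a₁ ≠ 0`). -/
theorem stmt17 (V : Type*) [Field V] [CharZero V]
    (d : V → V)
    (hd_add : ∀ a b : V, d (a + b) = d a + d b)
    (hd_mul : ∀ a b : V, d (a * b) = d a * b + a * d b)
    (u : ℕ → V) (hdu : ∀ n, d (u n) = u (n + 1))
    (a1 a2 a3 b2 : V)
    (ha1c : d a1 = 0) (ha2c : d a2 = 0) (ha3c : d a3 = 0) (hb2c : d b2 = 0)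
    (hb2 : b2 ≠ 0) (hu2 : u 2 ≠ 0) :
    let F : V := (u 1) ^ 2 / (2 * b2)
    d ((u 2)⁻¹ * d F) = u 2 / b2 ∧
    a1 * d (d ((u 2)⁻¹ * d F)) + ((a2 + a3 * (u 1) ^ 2) / u 2) * d F - a3 * u 1 * F
      = a1 / b2 * u 3 + a2 / b2 * u 1 + a3 / (2 * b2) * (u 1) ^ 3 := by
  intro F
  have h2b2 : (2 : V) * b2 ≠ 0 := mul_ne_zero two_ne_zero hb2
  have hd1 : d 1 = 0 := by
    have := hd_mul 1 1
    simp at this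
    exact this
  have hdinv : ∀ c : V, c ≠ 0 → d c = 0 → d c⁻¹ = 0 := by
    intro c hc hdc
    have h := hd_mul c c⁻¹
    rw [mul_inv_cancel₀ hc, hd1, hdc] at h
    have : c * d c⁻¹ = 0 := by linear_combination -h
    rcases mul_eq_zero.mp this with h' | h'
    · exact absurd h' hc
    · exact h'
  have hd2 : d 2 = 0 := by
    have := hd_add 1 1
    rw [hd1] at this
    simpa [one_add_one_eq_two] using this
  have hdc2b2 : d (2 * b2) = 0 := by
    rw [hd_mul, hd2, hb2c]; ring
  have hdF : d F = u 1 * u 2 / b2 := by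
    show d ((u 1) ^ 2 / (2 * b2)) = _
    rw [div_eq_mul_inv, hd_mul, hdinv _ h2b2 hdc2b2, sq, hd_mul, hdu]
    field_simp
    ring
  have hmid : (u 2)⁻¹ * d F = u 1 * b2⁻¹ := by
    rw [hdF]; field_simp
  rw [hmid]
  have hdb2inv : d b2⁻¹ = 0 := hdinv _ hb2 hb2c
  have hdmid : d (u 1 * b2⁻¹) = u 2 * b2⁻¹ := by
    rw [hd_mul, hdu, hdb2inv]; ring
  constructor
  · rw [hdmid]; field_simp
  · rw [hdmid, hd_mul, hdu, hdb2inv, hdF]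
    show _ - a3 * u 1 * ((u 1) ^ 2 / (2 * b2)) = _
    field_simp
    ring
end

section
/- Let V be the field of differential functions in one variable u, and let B = ∂∘(1/u')∘∂∘(1/u')∘∂∘(1/D(u'))∘∂ where D(u') = ((1/u')(u''/u')')'. Then the kernel of B (over the constants C) is the 4-dimensional C-vector space spanned by f₁ = 1, f₂ = (1/u')(u''/u')', f₃ = (u/u')(u''/u')' − u''/u', and f₄ = (u²/u')(u''/u')' − 2u(u''/u') + 2u'. -/
section Aux
variable {K : Type*} [Field K] {d : K → K}

lemma aux_d0 (hd_add : ∀ a b : K, d (a + b) = d a + d b) : d 0 = 0 := by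
  have h := hd_add 0 0
  simp only [add_zero] at h
  exact (left_eq_add.mp h)

lemma aux_d1 (hd_mul : ∀ a b : K, d (a * b) = d a * b + a * d b) : d 1 = 0 := by
  have h := hd_mul 1 1
  simp only [mul_one, one_mul] at h
  exact (left_eq_add.mp h)

lemma aux_dneg (hd_add : ∀ a b : K, d (a + b) = d a + d b) (a : K) : d (-a) = -d a := by
  have h := hd_add a (-a)
  rw [add_neg_cancel, aux_d0 hd_add] at h
  linear_combination -h

lemma aux_dsub (hd_add : ∀ a b : K, d (a + b) = d a + d b) (a b : K) :
    d (a - b) = d a - d b := by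
  rw [sub_eq_add_neg, hd_add, aux_dneg hd_add, sub_eq_add_neg]

lemma aux_d2 (hd_add : ∀ a b : K, d (a + b) = d a + d b)
    (hd_mul : ∀ a b : K, d (a * b) = d a * b + a * d b) : d 2 = 0 := by
  have h := hd_add 1 1
  rw [aux_d1 hd_mul] at h
  norm_num at h
  exact h

lemma aux_dinv_const (hd_mul : ∀ a b : K, d (a * b) = d a * b + a * d b)
    {a : K} (ha : d a = 0) : d a⁻¹ = 0 := by
  rcases eq_or_ne a 0 with rfl | h0
  · rw [inv_zero]; exact ha
  · have h := hd_mul a a⁻¹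
    rw [mul_inv_cancel₀ h0, aux_d1 hd_mul, ha] at h
    have : a * d a⁻¹ = 0 := by linear_combination -h
    rcases mul_eq_zero.mp this with h | h
    · exact absurd h h0
    · exact h

lemma aux_key {K : Type*} [Field K] [CharZero K] (d : K → K)
    (hd_add : ∀ a b : K, d (a + b) = d a + d b)
    (hd_mul : ∀ a b : K, d (a * b) = d a * b + a * d b)
    (u u' u'' f2 DL f3 f4 : K)
    (hu'd : u' = d u) (hu''d : u'' = d u')
    (hf2 : f2 = u'⁻¹ * d (u'' / u')) (hDLd : DL = d f2)
    (hf3 : f3 = u * f2 - u'' / u')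
    (hf4 : f4 = u ^ 2 * f2 - 2 * u * (u'' / u') + 2 * u')
    (hu'0 : u' ≠ 0) (hDL0 : DL ≠ 0) :
    (∀ f : K, d (u'⁻¹ * d (u'⁻¹ * d (DL⁻¹ * d f))) = 0 ↔
        ∃ c1 c2 c3 c4 : K, d c1 = 0 ∧ d c2 = 0 ∧ d c3 = 0 ∧ d c4 = 0 ∧
          f = c1 * 1 + c2 * f2 + c3 * f3 + c4 * f4) ∧
    (∀ c1 c2 c3 c4 : K, d c1 = 0 → d c2 = 0 → d c3 = 0 → d c4 = 0 →
        c1 * 1 + c2 * f2 + c3 * f3 + c4 * f4 = 0 →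
        c1 = 0 ∧ c2 = 0 ∧ c3 = 0 ∧ c4 = 0) := by
  have d0 : d 0 = 0 := aux_d0 hd_add
  have d1 : d 1 = 0 := aux_d1 hd_mul
  have d2 : d (2 : K) = 0 := aux_d2 hd_add hd_mul
  have dsub : ∀ a b : K, d (a - b) = d a - d b := aux_dsub hd_add
  have dhalf : d ((2 : K)⁻¹) = 0 := aux_dinv_const hd_mul d2
  have hq : d (u'' / u') = u' * f2 := by
    rw [hf2]; field_simp
  have huu : u' * (u'' / u') = u'' := by field_simp
  have hdu2 : d (u ^ 2) = 2 * u * u' := by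
    rw [pow_two, hd_mul u u, ← hu'd]; ring
  have hdf3 : d f3 = u * DL := by
    rw [hf3, dsub (u * f2) (u'' / u'), hd_mul u f2, hq, ← hu'd, ← hDLd]
    ring
  have hdf4 : d f4 = u ^ 2 * DL := by
    rw [hf4, hd_add, dsub (u ^ 2 * f2) (2 * u * (u'' / u')), hd_mul (u ^ 2) f2,
      hd_mul (2 * u) (u'' / u'), hd_mul 2 u, hd_mul 2 u', hdu2, hq, d2,
      ← hu'd, ← hu''d, ← hDLd]
    linear_combination (-2 : K) * huu
  -- the common computation of d of a linear combination
  have hdf_comb : ∀ c1 c2 c3 c4 : K, d c1 = 0 → d c2 = 0 → d c3 = 0 → d c4 = 0 →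
      d (c1 * 1 + c2 * f2 + c3 * f3 + c4 * f4) = DL * (c2 + c3 * u + c4 * u ^ 2) := by
    intro c1 c2 c3 c4 hc1 hc2 hc3 hc4
    rw [hd_add, hd_add, hd_add, hd_mul c1 1, hd_mul c2 f2, hd_mul c3 f3,
      hd_mul c4 f4, hc1, hc2, hc3, hc4, d1, ← hDLd, hdf3, hdf4]
    ring
  have h1 : ∀ c2 c3 c4 : K, d c2 = 0 → d c3 = 0 → d c4 = 0 →
      d (c2 + c3 * u + c4 * u ^ 2) = u' * (c3 + 2 * c4 * u) := by
    intro c2 c3 c4 hc2 hc3 hc4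
    rw [hd_add, hd_add, hd_mul c3 u, hd_mul c4 (u ^ 2), hc2, hc3, hc4, hdu2, ← hu'd]
    ring
  have h2 : ∀ c3 c4 : K, d c3 = 0 → d c4 = 0 →
      d (c3 + 2 * c4 * u) = u' * (2 * c4) := by
    intro c3 c4 hc3 hc4
    rw [hd_add, hd_mul (2 * c4) u, hd_mul 2 c4, hc3, hc4, d2, ← hu'd]
    ring
  constructor
  · intro f
    constructor
    · -- forward: kernel → span
      intro hBf
      set Z : K := DL⁻¹ * d f with hZdef
      set Y : K := u'⁻¹ * d Z with hYdef
      set c4' : K := u'⁻¹ * d Y with hc4def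
      have hdc4 : d c4' = 0 := hBf
      have hdY : d Y = u' * c4' := by rw [hc4def]; field_simp
      have hdc3 : d (Y - c4' * u) = 0 := by
        rw [dsub Y (c4' * u), hd_mul c4' u, hdY, hdc4, ← hu'd]; ring
      set c3' : K := Y - c4' * u with hc3def
      have hdZ : d Z = u' * Y := by rw [hYdef]; field_simp
      set c2' : K := Z - c4' * (2 : K)⁻¹ * u ^ 2 - c3' * u with hc2def
      have hdc2 : d c2' = 0 := by
        rw [hc2def, dsub (Z - c4' * (2 : K)⁻¹ * u ^ 2) (c3' * u),
          dsub Z (c4' * (2 : K)⁻¹ * u ^ 2), hd_mul (c4' * (2 : K)⁻¹) (u ^ 2),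
          hd_mul c4' ((2 : K)⁻¹), hd_mul c3' u, hdu2, hdZ, hdc4, dhalf, hdc3, ← hu'd]
        linear_combination (-u') * hc3def
      have hdf : d f = DL * Z := by
        rw [hZdef, mul_inv_cancel_left₀ hDL0]
      set c1' : K := f - c2' * f2 - c3' * f3 - c4' * (2 : K)⁻¹ * f4 with hc1def
      have hdc1 : d c1' = 0 := by
        rw [hc1def, dsub (f - c2' * f2 - c3' * f3) (c4' * (2 : K)⁻¹ * f4),
          dsub (f - c2' * f2) (c3' * f3), dsub f (c2' * f2),
          hd_mul c2' f2, hd_mul c3' f3, hd_mul (c4' * (2 : K)⁻¹) f4,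
          hd_mul c4' ((2 : K)⁻¹), hdf, hdc2, hdc3, hdc4, dhalf, ← hDLd, hdf3, hdf4]
        linear_combination (-DL) * hc2def
      refine ⟨c1', c2', c3', c4' * (2 : K)⁻¹, hdc1, hdc2, hdc3, ?_, ?_⟩
      · rw [hd_mul c4' ((2 : K)⁻¹), hdc4, dhalf]; ring
      · linear_combination -hc1def
    · -- reverse: span → kernel
      rintro ⟨c1, c2, c3, c4, hc1, hc2, hc3, hc4, rfl⟩
      rw [hdf_comb c1 c2 c3 c4 hc1 hc2 hc3 hc4, inv_mul_cancel_left₀ hDL0,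
        h1 c2 c3 c4 hc2 hc3 hc4, inv_mul_cancel_left₀ hu'0,
        h2 c3 c4 hc3 hc4, inv_mul_cancel_left₀ hu'0, hd_mul 2 c4, hc4, d2]
      ring
  · -- linear independence
    intro c1 c2 c3 c4 hc1 hc2 hc3 hc4 hsum
    have hd0 : DL * (c2 + c3 * u + c4 * u ^ 2) = 0 := by
      rw [← hdf_comb c1 c2 c3 c4 hc1 hc2 hc3 hc4, hsum, d0]
    have hP : c2 + c3 * u + c4 * u ^ 2 = 0 :=
      (mul_eq_zero.mp hd0).resolve_left hDL0
    have hQ : c3 + 2 * c4 * u = 0 := by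
      have h := h1 c2 c3 c4 hc2 hc3 hc4
      rw [hP, d0] at h
      exact (mul_eq_zero.mp h.symm).resolve_left hu'0
    have hc4z : c4 = 0 := by
      have h := h2 c3 c4 hc3 hc4
      rw [hQ, d0] at h
      have h' : 2 * c4 = 0 := (mul_eq_zero.mp h.symm).resolve_left hu'0
      exact (mul_eq_zero.mp h').resolve_left two_ne_zero
    have hc3z : c3 = 0 := by rw [hc4z] at hQ; linear_combination hQ
    have hc2z : c2 = 0 := by rw [hc4z, hc3z] at hP; linear_combination hP
    have hc1z : c1 = 0 := by
      rw [hc4z, hc3z, hc2z] at hsum; linear_combination hsum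
    exact ⟨hc1z, hc2z, hc3z, hc4z⟩

end Aux

/-- Let `V` be a field of differential functions in one variable `u` (with `u' ≠ 0` and
`D(u') = ((1/u')(u''/u')')' ≠ 0`), and let
`B = ∂∘(1/u')∘∂∘(1/u')∘∂∘(1/D(u'))∘∂`.  Then the kernel of `B` is the 4-dimensional
vector space over the subfield `C` of constants spanned by `f₁ = 1`,
`f₂ = (1/u')(u''/u')'`, `f₃ = (u/u')(u''/u')' − u''/u'`, and
`f₄ = (u²/u')(u''/u')' − 2u(u''/u') + 2u'`: every element of the kernel is a `C`-linear
combination of `f₁, f₂, f₃, f₄` (and conversely), and `f₁, f₂, f₃, f₄` are linearly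
independent over `C`. -/
theorem stmt19 (K : Type*) [Field K] [CharZero K]
    (d : K → K)
    (hd_add : ∀ a b : K, d (a + b) = d a + d b)
    (hd_mul : ∀ a b : K, d (a * b) = d a * b + a * d b)
    (u : K) (hu' : d u ≠ 0)
    (hDL : d ((d u)⁻¹ * d (d (d u) / d u)) ≠ 0) :
    let u' : K := d u
    let u'' : K := d u'
    let f2 : K := u'⁻¹ * d (u'' / u')
    let DL : K := d f2
    let f3 : K := u * f2 - u'' / u'
    let f4 : K := u ^ 2 * f2 - 2 * u * (u'' / u') + 2 * u'
    let B : K → K := fun f => d (u'⁻¹ * d (u'⁻¹ * d (DL⁻¹ * d f)))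
    (∀ f : K, B f = 0 ↔
        ∃ c1 c2 c3 c4 : K, d c1 = 0 ∧ d c2 = 0 ∧ d c3 = 0 ∧ d c4 = 0 ∧
          f = c1 * 1 + c2 * f2 + c3 * f3 + c4 * f4) ∧
    (∀ c1 c2 c3 c4 : K, d c1 = 0 → d c2 = 0 → d c3 = 0 → d c4 = 0 →
        c1 * 1 + c2 * f2 + c3 * f3 + c4 * f4 = 0 →
        c1 = 0 ∧ c2 = 0 ∧ c3 = 0 ∧ c4 = 0) := by
  intro u' u'' f2 DL f3 f4 B
  exact aux_key d hd_add hd_mul u u' u'' f2 DL f3 f4 rfl rfl rfl rfl rfl rfl hu' hDL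
end
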